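/- arXiv:1109.5303 — 8 statements merged into one kernel-verified Lean document; each statement's English description precedes it below -/
import Mathlib

section
/- One has max(H(−1,−1), H(2,2)) < min(H(−1,2), H(2,−1)). -/
open Set

lemma deriv_bound_aux (F f : ℝ → ℝ) (hF : ∀ x, HasDerivAt F (f x) x)
    (hf : ∀ x, f x ∈ Set.Icc (0:ℝ) 1) :
    F 2 - F (-1) ∈ Set.Icc (0:ℝ) 3 := by
  have hab : (-1:ℝ) < 2 := by norm_num
  obtain ⟨c, hc, heq⟩ := exists_hasDerivAt_eq_slope F f hab
    (fun x _ => (hF x).continuousAt.continuousWithinAt) (fun x _ => hF x)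
  obtain ⟨h0, h1⟩ := hf c
  have : F 2 - F (-1) = f c * 3 := by
    field_simp at heq
    linarith
  constructor <;> nlinarith

/-- `max (H(-1,-1)) (H(2,2)) < min (H(-1,2)) (H(2,-1))`. -/
theorem H_corner_inequality
    (F G f g : ℝ → ℝ)
    (hF : ∀ x, HasDerivAt F (f x) x) (hG : ∀ y, HasDerivAt G (g y) y)
    (hf : ∀ x, f x ∈ Set.Icc (0:ℝ) 1) (hg : ∀ y, g y ∈ Set.Icc (0:ℝ) 1)
    (H : ℝ × ℝ → ℝ) (hH : ∀ x y : ℝ, H (x, y) = F x + G y - x * y) :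
    max (H (-1, -1)) (H (2, 2)) < min (H (-1, 2)) (H (2, -1)) := by
  obtain ⟨hF0, hF1⟩ := deriv_bound_aux F f hF hf
  obtain ⟨hG0, hG1⟩ := deriv_bound_aux G g hG hg
  rw [max_lt_iff, lt_min_iff, lt_min_iff]
  simp only [hH]
  refine ⟨⟨by nlinarith, by nlinarith⟩, by nlinarith, by nlinarith⟩
end

section
/- The infimum c is attained as a minimum: the points (−1,−1) and (2,2) lie in the same connected component of the set {(x,y) ∈ Q : H(x,y) ≤ c}. -/
open Set

/-- The intersection of a directed family of nonempty compact connected sets in a T2 space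
is connected. -/
lemma isConnected_iInter_directed {α : Type*} [TopologicalSpace α] [T2Space α]
    {ι : Type*} [Nonempty ι] {K : ι → Set α} (hd : Directed (· ⊇ ·) K)
    (hK : ∀ i, IsCompact (K i)) (hKc : ∀ i, IsConnected (K i)) :
    IsConnected (⋂ i, K i) := by
  have hKcl : ∀ i, IsClosed (K i) := fun i => (hK i).isClosed
  have hne : (⋂ i, K i).Nonempty :=
    IsCompact.nonempty_iInter_of_directed_nonempty_isCompact_isClosed K hd
      (fun i => (hKc i).nonempty) hK hKcl
  refine ⟨hne, ?_⟩
  have hScl : IsClosed (⋂ i, K i) := isClosed_iInter hKcl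
  rw [isPreconnected_iff_subset_of_fully_disjoint_closed hScl]
  intro u v hu hv hsuv huv
  by_contra hcon
  push_neg at hcon
  obtain ⟨hnu, hnv⟩ := hcon
  have hScomp : IsCompact (⋂ i, K i) :=
    ((hK (Classical.arbitrary ι)).of_isClosed_subset hScl (iInter_subset _ _))
  have hA : IsCompact ((⋂ i, K i) ∩ u) := hScomp.inter_right hu
  have hB : IsCompact ((⋂ i, K i) ∩ v) := hScomp.inter_right hv
  have hABd : Disjoint ((⋂ i, K i) ∩ u) ((⋂ i, K i) ∩ v) :=
    huv.mono inter_subset_right inter_subset_right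
  obtain ⟨U, V, hUo, hVo, hAU, hBV, hUV⟩ := SeparatedNhds.of_isCompact_isCompact hA hB hABd
  -- the sets K i \ (U ∪ V) form a directed family of compact closed sets with empty intersection
  have hSsub : (⋂ i, K i) ⊆ U ∪ V := by
    intro p hp
    rcases hsuv hp with hpu | hpv
    · exact Or.inl (hAU ⟨hp, hpu⟩)
    · exact Or.inr (hBV ⟨hp, hpv⟩)
  have hempty : (⋂ i, K i \ (U ∪ V)) = ∅ := by
    rw [eq_empty_iff_forall_notMem]
    intro p hp
    have h1 : p ∈ ⋂ i, K i := mem_iInter.mpr fun i => (mem_iInter.mp hp i).1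
    exact (mem_iInter.mp hp (Classical.arbitrary _)).2 (hSsub h1)
  have hex : ∃ i, K i \ (U ∪ V) = ∅ := by
    by_contra hforall
    push_neg at hforall
    have : (⋂ i, K i \ (U ∪ V)).Nonempty := by
      refine IsCompact.nonempty_iInter_of_directed_nonempty_isCompact_isClosed _ ?_ ?_ ?_ ?_
      · intro i j
        obtain ⟨k, hki, hkj⟩ := hd i j
        exact ⟨k, diff_subset_diff_left hki, diff_subset_diff_left hkj⟩
      · intro i
        exact hforall i
      · intro i
        exact (hK i).diff (hUo.union hVo)
      · intro i
        exact (hKcl i).sdiff (hUo.union hVo)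
    rw [hempty] at this
    exact this.ne_empty rfl
  obtain ⟨i, hi⟩ := hex
  have hKiUV : K i ⊆ U ∪ V := by
    intro p hp
    by_contra hpUV
    exact (eq_empty_iff_forall_notMem.mp hi p) ⟨hp, hpUV⟩
  -- K i meets both U and V, contradicting connectedness
  obtain ⟨x, hxS, hxu⟩ : ∃ x ∈ ⋂ i, K i, x ∉ u := by
    rcases not_subset.mp hnu with ⟨x, hx1, hx2⟩; exact ⟨x, hx1, hx2⟩
  obtain ⟨y, hyS, hyv⟩ : ∃ y ∈ ⋂ i, K i, y ∉ v := by
    rcases not_subset.mp hnv with ⟨y, hy1, hy2⟩; exact ⟨y, hy1, hy2⟩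
  have hxV : x ∈ V := hBV ⟨hxS, (hsuv hxS).resolve_left hxu⟩
  have hyU : y ∈ U := hAU ⟨hyS, (hsuv hyS).resolve_right hyv⟩
  have := (hKc i).2 U V hUo hVo hKiUV ⟨y, mem_iInter.mp hyS i, hyU⟩ ⟨x, mem_iInter.mp hxS i, hxV⟩
  obtain ⟨z, _, hzU, hzV⟩ := this
  exact hUV.ne_of_mem hzU hzV rfl

/-- The infimum `c` is attained: `(-1,-1)` and `(2,2)` lie in the same
connected component of `{p ∈ Q : H p ≤ c}`. -/
theorem c_is_attained
    (F G f g : ℝ → ℝ)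
    (hF : ∀ x, HasDerivAt F (f x) x) (hG : ∀ y, HasDerivAt G (g y) y)
    (hf : ∀ x, f x ∈ Set.Icc (0:ℝ) 1) (hg : ∀ y, g y ∈ Set.Icc (0:ℝ) 1)
    (H : ℝ × ℝ → ℝ) (hH : ∀ x y : ℝ, H (x, y) = F x + G y - x * y)
    (Q : Set (ℝ × ℝ)) (hQ : Q = Set.Icc (-1:ℝ) 2 ×ˢ Set.Icc (-1:ℝ) 2)
    (c : ℝ)
    (hc : c = sInf {d : ℝ | ((2:ℝ), (2:ℝ)) ∈
      connectedComponentIn {p : ℝ × ℝ | p ∈ Q ∧ H p ≤ d} (-1, -1)}) :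
    ((2:ℝ), (2:ℝ)) ∈ connectedComponentIn {p : ℝ × ℝ | p ∈ Q ∧ H p ≤ c} (-1, -1) := by
  classical
  -- Continuity of H
  have hHeq : H = fun p : ℝ × ℝ => F p.1 + G p.2 - p.1 * p.2 := by
    funext p; rcases p with ⟨x, y⟩; exact hH x y
  have hFc : Continuous F := by
    rw [continuous_iff_continuousAt]; exact fun x => (hF x).differentiableAt.continuousAt
  have hGc : Continuous G := by
    rw [continuous_iff_continuousAt]; exact fun y => (hG y).differentiableAt.continuousAt
  have hHcont : Continuous H := by
    rw [hHeq]
    exact ((hFc.comp continuous_fst).add (hGc.comp continuous_snd)).sub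
      (continuous_fst.mul continuous_snd)
  -- Basic facts about Q
  have hQcomp : IsCompact Q := by rw [hQ]; exact isCompact_Icc.prod isCompact_Icc
  have hQclosed : IsClosed Q := hQcomp.isClosed
  have hQpre : IsPreconnected Q := by
    rw [hQ]
    exact ((convex_Icc (-1:ℝ) 2).prod (convex_Icc (-1:ℝ) 2)).isPreconnected
  have hm1Q : ((-1:ℝ), (-1:ℝ)) ∈ Q := by
    rw [hQ]; constructor <;> constructor <;> norm_num
  have h2Q : ((2:ℝ), (2:ℝ)) ∈ Q := by
    rw [hQ]; constructor <;> constructor <;> norm_num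
  -- The sublevel sets
  set S : ℝ → Set (ℝ × ℝ) := fun d => {p : ℝ × ℝ | p ∈ Q ∧ H p ≤ d} with hSdef
  have hScl : ∀ d, IsClosed (S d) := fun d =>
    hQclosed.inter (isClosed_Iic.preimage hHcont)
  have hScomp : ∀ d, IsCompact (S d) := fun d =>
    hQcomp.of_isClosed_subset (hScl d) (fun p hp => hp.1)
  have hSmono : ∀ {d d' : ℝ}, d ≤ d' → S d ⊆ S d' := fun h p hp => ⟨hp.1, hp.2.trans h⟩
  -- The set D of good levels
  set D : Set ℝ := {d : ℝ | ((2:ℝ), (2:ℝ)) ∈ connectedComponentIn (S d) (-1, -1)} with hDdef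
  have hcD : c = sInf D := hc
  -- D is nonempty
  have hDne : D.Nonempty := by
    have hQne : (H '' Q).Nonempty := ⟨H ((2:ℝ), (2:ℝ)), mem_image_of_mem H h2Q⟩
    have hbdd : BddAbove (H '' Q) := (hQcomp.image hHcont).bddAbove
    refine ⟨sSup (H '' Q), ?_⟩
    have hSQ : S (sSup (H '' Q)) = Q := by
      ext p
      exact ⟨fun hp => hp.1, fun hp => ⟨hp, le_csSup hbdd (mem_image_of_mem H hp)⟩⟩
    show ((2:ℝ), (2:ℝ)) ∈ connectedComponentIn (S (sSup (H '' Q))) (-1, -1)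
    rw [hSQ, hQpre.connectedComponentIn hm1Q]
    exact h2Q
  -- D is bounded below
  have hDbdd : BddBelow D := by
    refine ⟨H ((-1:ℝ), (-1:ℝ)), fun d hd => ?_⟩
    have : ((-1:ℝ), (-1:ℝ)) ∈ S d :=
      connectedComponentIn_nonempty_iff.mp ⟨_, hd⟩
    exact this.2
  -- the components
  have hmemS : ∀ d ∈ D, ((-1:ℝ), (-1:ℝ)) ∈ S d := fun d hd =>
    connectedComponentIn_nonempty_iff.mp ⟨_, hd⟩
  haveI : Nonempty ↥D := hDne.to_subtype
  set K : ↥D → Set (ℝ × ℝ) := fun d => connectedComponentIn (S d.1) (-1, -1) with hKdef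
  have hKcomp : ∀ i : ↥D, IsCompact (K i) := by
    intro i
    have hm : ((-1:ℝ), (-1:ℝ)) ∈ S i.1 := hmemS i.1 i.2
    rw [hKdef]
    simp only
    rw [connectedComponentIn_eq_image hm]
    haveI : CompactSpace ↥(S i.1) := isCompact_iff_compactSpace.mp (hScomp i.1)
    exact (isClosed_connectedComponent.isCompact).image continuous_subtype_val
  have hKconn : ∀ i : ↥D, IsConnected (K i) :=
    fun i => ⟨⟨_, i.2⟩, isPreconnected_connectedComponentIn⟩
  have hKdir : Directed (· ⊇ ·) K := by
    intro i j
    rcases le_total i.1 j.1 with h | h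
    · exact ⟨i, subset_rfl, connectedComponentIn_mono _ (hSmono h)⟩
    · exact ⟨j, connectedComponentIn_mono _ (hSmono h), subset_rfl⟩
  have hIconn : IsConnected (⋂ i, K i) := isConnected_iInter_directed hKdir hKcomp hKconn
  have hm1K : ((-1:ℝ), (-1:ℝ)) ∈ ⋂ i, K i :=
    mem_iInter.mpr fun i => mem_connectedComponentIn (hmemS i.1 i.2)
  have h2K : ((2:ℝ), (2:ℝ)) ∈ ⋂ i, K i := mem_iInter.mpr fun i => i.2
  -- the intersection is contained in S c
  have hKsub : (⋂ i, K i) ⊆ S c := by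
    intro p hp
    have hpS : ∀ i : ↥D, p ∈ S i.1 := fun i =>
      connectedComponentIn_subset _ _ (mem_iInter.mp hp i)
    refine ⟨(hpS ⟨hDne.choose, hDne.choose_spec⟩).1, ?_⟩
    rw [hcD]
    exact le_csInf hDne fun d hd => (hpS ⟨d, hd⟩).2
  exact hIconn.2.subset_connectedComponentIn hm1K hKsub h2K
end

section
/- One has max(H(−1,−1), H(2,2)) < c < min(H(−1,2), H(2,−1)). -/
open Set

/-- `max (H(-1,-1)) (H(2,2)) < c < min (H(-1,2)) (H(2,-1))`. -/
theorem c_strictly_between_corner_values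
    (F G f g : ℝ → ℝ)
    (hF : ∀ x, HasDerivAt F (f x) x) (hG : ∀ y, HasDerivAt G (g y) y)
    (hf : ∀ x, f x ∈ Set.Icc (0:ℝ) 1) (hg : ∀ y, g y ∈ Set.Icc (0:ℝ) 1)
    (H : ℝ × ℝ → ℝ) (hH : ∀ x y : ℝ, H (x, y) = F x + G y - x * y)
    (Q : Set (ℝ × ℝ)) (hQ : Q = Set.Icc (-1:ℝ) 2 ×ˢ Set.Icc (-1:ℝ) 2)
    (c : ℝ)
    (hc : c = sInf {d : ℝ | ((2:ℝ), (2:ℝ)) ∈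
      connectedComponentIn {p : ℝ × ℝ | p ∈ Q ∧ H p ≤ d} (-1, -1)}) :
    max (H (-1, -1)) (H (2, 2)) < c ∧ c < min (H (-1, 2)) (H (2, -1)) := by
  -- Monotonicity and 1-Lipschitz facts
  have hFmono : Monotone F :=
    monotone_of_deriv_nonneg (fun x => (hF x).differentiableAt)
      (fun x => by rw [(hF x).deriv]; exact (hf x).1)
  have hGmono : Monotone G :=
    monotone_of_deriv_nonneg (fun y => (hG y).differentiableAt)
      (fun y => by rw [(hG y).deriv]; exact (hg y).1)
  have hFlip : Monotone (fun x => x - F x) :=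
    monotone_of_deriv_nonneg
      (fun x => ((differentiableAt_fun_id).sub (hF x).differentiableAt))
      (fun x => by
        have h : HasDerivAt (fun x => x - F x) (1 - f x) x := (hasDerivAt_id x).sub (hF x)
        rw [h.deriv]; linarith [(hf x).2])
  have hGlip : Monotone (fun y => y - G y) :=
    monotone_of_deriv_nonneg
      (fun y => ((differentiableAt_fun_id).sub (hG y).differentiableAt))
      (fun y => by
        have h : HasDerivAt (fun y => y - G y) (1 - g y) y := (hasDerivAt_id y).sub (hG y)
        rw [h.deriv]; linarith [(hg y).2])
  have hFlip' : ∀ a b : ℝ, a ≤ b → F b - F a ≤ b - a := fun a b hab => by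
    have := hFlip hab; simp only at this; linarith
  have hGlip' : ∀ a b : ℝ, a ≤ b → G b - G a ≤ b - a := fun a b hab => by
    have := hGlip hab; simp only at this; linarith
  set S : Set ℝ := {d : ℝ | ((2:ℝ), (2:ℝ)) ∈
      connectedComponentIn {p : ℝ × ℝ | p ∈ Q ∧ H p ≤ d} (-1, -1)} with hS
  set d₁ : ℝ := min (H (-1, 2)) (H (2, -1)) - 3/4 with hd₁
  -- upper bound: the diagonal connects the two corners at level d₁
  have hd₁S : d₁ ∈ S := by
    have hcont : Continuous (fun t : ℝ => ((t, t) : ℝ × ℝ)) := by continuity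
    have hpre : IsPreconnected ((fun t : ℝ => ((t, t) : ℝ × ℝ)) '' Icc (-1) 2) :=
      (isPreconnected_Icc).image _ hcont.continuousOn
    have hsub : (fun t : ℝ => ((t, t) : ℝ × ℝ)) '' Icc (-1) 2 ⊆
        {p : ℝ × ℝ | p ∈ Q ∧ H p ≤ d₁} := by
      rintro p ⟨t, ht, rfl⟩
      refine ⟨by rw [hQ]; exact ⟨ht, ht⟩, ?_⟩
      rw [hH, hd₁]
      have h1 : F t - F (-1) ≤ t - (-1) := hFlip' _ _ ht.1
      have h2 : G t ≤ G 2 := hGmono ht.2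
      have h3 : F t ≤ F 2 := hFmono ht.2
      have h4 : G t - G (-1) ≤ t - (-1) := hGlip' _ _ ht.1
      have hA : F t + G t - t * t ≤ H (-1, 2) - 3/4 := by
        rw [hH]; nlinarith [sq_nonneg (t - 1/2)]
      have hB : F t + G t - t * t ≤ H (2, -1) - 3/4 := by
        rw [hH]; nlinarith [sq_nonneg (t - 1/2)]
      rcases le_total (H (-1, 2)) (H (2, -1)) with h | h
      · rw [min_eq_left h]; exact hA
      · rw [min_eq_right h]; exact hB
    have hm1 : ((-1, -1) : ℝ × ℝ) ∈ (fun t : ℝ => ((t, t) : ℝ × ℝ)) '' Icc (-1) 2 :=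
      ⟨-1, by norm_num⟩
    have hm2 : ((2, 2) : ℝ × ℝ) ∈ (fun t : ℝ => ((t, t) : ℝ × ℝ)) '' Icc (-1) 2 :=
      ⟨2, by norm_num⟩
    exact hpre.subset_connectedComponentIn hm1 hsub hm2
  -- separation lemma
  have sep : ∀ (a : ℝ) (K : Set (ℝ × ℝ)), -1 < a → a < 2 →
      (∀ p ∈ K, 1/2 ≤ (p.1 - a) * (p.2 - a)) →
      ((2:ℝ), (2:ℝ)) ∉ connectedComponentIn K (-1, -1) := by
    intro a K ha1 ha2 hK hmem
    set C := connectedComponentIn K ((-1, -1) : ℝ × ℝ) with hC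
    have hCK : C ⊆ K := connectedComponentIn_subset _ _
    have hm1K : ((-1, -1) : ℝ × ℝ) ∈ K :=
      connectedComponentIn_nonempty_iff.mp ⟨_, hmem⟩
    have hm1 : ((-1, -1) : ℝ × ℝ) ∈ C := mem_connectedComponentIn hm1K
    have hpre : IsPreconnected C := isPreconnected_connectedComponentIn
    have hU : IsOpen {p : ℝ × ℝ | a < p.1 ∧ a < p.2} :=
      (isOpen_lt continuous_const continuous_fst).inter
        (isOpen_lt continuous_const continuous_snd)
    have hV : IsOpen {p : ℝ × ℝ | p.1 < a ∧ p.2 < a} :=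
      (isOpen_lt continuous_fst continuous_const).inter
        (isOpen_lt continuous_snd continuous_const)
    have hdisj : Disjoint {p : ℝ × ℝ | a < p.1 ∧ a < p.2}
        {p : ℝ × ℝ | p.1 < a ∧ p.2 < a} := by
      rw [Set.disjoint_left]
      rintro p ⟨h1, _⟩ ⟨h1', _⟩
      exact absurd (h1.trans h1') (lt_irrefl a)
    have hcov : C ⊆ {p : ℝ × ℝ | a < p.1 ∧ a < p.2} ∪
        {p : ℝ × ℝ | p.1 < a ∧ p.2 < a} := by
      intro p hp
      have h := hK p (hCK hp)
      rcases lt_trichotomy p.1 a with h1 | h1 | h1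
      · right
        refine ⟨h1, ?_⟩
        by_contra h2
        push_neg at h2
        nlinarith
      · exfalso; rw [h1] at h; nlinarith
      · left
        refine ⟨h1, ?_⟩
        by_contra h2
        push_neg at h2
        nlinarith
    rcases hpre.subset_or_subset hU hV hdisj hcov with h | h
    · have := h hm1; simp only [mem_setOf_eq] at this; linarith [this.1]
    · have := h hmem; simp only [mem_setOf_eq] at this; linarith [this.1]
  -- lower bounds on every element of S
  have hlb : ∀ d ∈ S, max (H (-1, -1)) (H (2, 2)) + 1/2 ≤ d := by
    intro d hd
    have h1 : H (-1, -1) + 1/2 ≤ d := by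
      by_contra hcon
      push_neg at hcon
      refine sep 0 _ (by norm_num) (by norm_num) ?_ hd
      rintro ⟨x, y⟩ ⟨hpQ, hpH⟩
      rw [hQ] at hpQ
      obtain ⟨hx, hy⟩ := hpQ
      rw [hH] at hpH hcon
      have hFx : F (-1) ≤ F x := hFmono hx.1
      have hGy : G (-1) ≤ G y := hGmono hy.1
      simp only [sub_zero]
      nlinarith
    have h2 : H (2, 2) + 1/2 ≤ d := by
      by_contra hcon
      push_neg at hcon
      refine sep 1 _ (by norm_num) (by norm_num) ?_ hd
      rintro ⟨x, y⟩ ⟨hpQ, hpH⟩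
      rw [hQ] at hpQ
      obtain ⟨hx, hy⟩ := hpQ
      rw [hH] at hpH hcon
      have hFx : F 2 - F x ≤ 2 - x := hFlip' _ _ hx.2
      have hGy : G 2 - G y ≤ 2 - y := hGlip' _ _ hy.2
      nlinarith
    rcases max_cases (H (-1, -1)) (H (2, 2)) with ⟨he, _⟩ | ⟨he, _⟩ <;> rw [he] <;> linarith
  have hbdd : BddBelow S := ⟨max (H (-1, -1)) (H (2, 2)) + 1/2, hlb⟩
  constructor
  · have := le_csInf ⟨d₁, hd₁S⟩ hlb
    rw [hc]; linarith
  · have hle : c ≤ d₁ := hc ▸ csInf_le hbdd hd₁S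
    rw [hd₁] at hle; linarith
end

section
/- The level set {(x,y) ∈ Q : H(x,y) = c} intersects each of the four edges of Q in exactly one point, and that point is not an endpoint of the edge (i.e., not a corner of Q). -/
open Set

private lemma hd_monotone {φ ψ : ℝ → ℝ} (h : ∀ x, HasDerivAt φ (ψ x) x)
    (hp : ∀ x, 0 ≤ ψ x) : Monotone φ :=
  monotone_of_deriv_nonneg (fun x => (h x).differentiableAt)
    (fun x => by rw [(h x).deriv]; exact hp x)

private lemma hd_strictMono {φ ψ : ℝ → ℝ} (h : ∀ x, HasDerivAt φ (ψ x) x)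
    (hp : ∀ x, 0 < ψ x) : StrictMono φ :=
  strictMono_of_deriv_pos fun x => by rw [(h x).deriv]; exact hp x

private lemma hd_strictAnti {φ ψ : ℝ → ℝ} (h : ∀ x, HasDerivAt φ (ψ x) x)
    (hp : ∀ x, ψ x < 0) : StrictAnti φ :=
  strictAnti_of_deriv_neg fun x => by rw [(h x).deriv]; exact hp x

private lemma hd_cont {φ ψ : ℝ → ℝ} (h : ∀ x, HasDerivAt φ (ψ x) x) : Continuous φ :=
  Differentiable.continuous fun x => (h x).differentiableAt

private lemma hd_lip {φ ψ : ℝ → ℝ} (h : ∀ x, HasDerivAt φ (ψ x) x)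
    (h1 : ∀ x, ψ x ≤ 1) {a b : ℝ} (hab : a ≤ b) : φ b - φ a ≤ b - a := by
  have hm : Monotone (fun x => x - φ x) :=
    hd_monotone (fun x => (hasDerivAt_id x).sub (h x)) (fun x => by linarith [h1 x])
  have := hm hab
  simp only at this
  linarith

private lemma edge_mono {φ : ℝ → ℝ} (hmono : StrictMono φ) (hcont : Continuous φ)
    {c : ℝ} (h1 : φ (-1) < c) (h2 : c < φ 2) :
    (∃! x, x ∈ Icc (-1:ℝ) 2 ∧ φ x = c) ∧
      ∀ x ∈ Icc (-1:ℝ) 2, φ x = c → x ∈ Ioo (-1:ℝ) 2 := by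
  obtain ⟨x, hx, hfx⟩ := intermediate_value_Icc (by norm_num : (-1:ℝ) ≤ 2)
    hcont.continuousOn ⟨h1.le, h2.le⟩
  refine ⟨⟨x, ⟨hx, hfx⟩, fun y hy => hmono.injective (hy.2.trans hfx.symm)⟩, ?_⟩
  intro y hy hfy
  refine ⟨lt_of_le_of_ne hy.1 ?_, lt_of_le_of_ne hy.2 ?_⟩
  · rintro rfl; exact absurd hfy (ne_of_lt h1)
  · rintro rfl; exact absurd hfy (ne_of_gt h2)

private lemma edge_anti {φ : ℝ → ℝ} (hanti : StrictAnti φ) (hcont : Continuous φ)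
    {c : ℝ} (h1 : φ 2 < c) (h2 : c < φ (-1)) :
    (∃! x, x ∈ Icc (-1:ℝ) 2 ∧ φ x = c) ∧
      ∀ x ∈ Icc (-1:ℝ) 2, φ x = c → x ∈ Ioo (-1:ℝ) 2 := by
  obtain ⟨x, hx, hfx⟩ := intermediate_value_Icc' (by norm_num : (-1:ℝ) ≤ 2)
    hcont.continuousOn ⟨h1.le, h2.le⟩
  refine ⟨⟨x, ⟨hx, hfx⟩, fun y hy => hanti.injective (hy.2.trans hfx.symm)⟩, ?_⟩
  intro y hy hfy
  refine ⟨lt_of_le_of_ne hy.1 ?_, lt_of_le_of_ne hy.2 ?_⟩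
  · rintro rfl; exact absurd hfy (ne_of_gt h2)
  · rintro rfl; exact absurd hfy (ne_of_lt h1)

/-- The level set `{p ∈ Q : H p = c}` meets each of the four edges of `Q` in
exactly one point, and this point is not a corner of `Q`. -/
theorem level_set_meets_each_edge_once
    (F G f g : ℝ → ℝ)
    (hF : ∀ x, HasDerivAt F (f x) x) (hG : ∀ y, HasDerivAt G (g y) y)
    (hf : ∀ x, f x ∈ Set.Icc (0:ℝ) 1) (hg : ∀ y, g y ∈ Set.Icc (0:ℝ) 1)
    (H : ℝ × ℝ → ℝ) (hH : ∀ x y : ℝ, H (x, y) = F x + G y - x * y)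
    (Q : Set (ℝ × ℝ)) (hQ : Q = Set.Icc (-1:ℝ) 2 ×ˢ Set.Icc (-1:ℝ) 2)
    (c : ℝ)
    (hc : c = sInf {d : ℝ | ((2:ℝ), (2:ℝ)) ∈
      connectedComponentIn {p : ℝ × ℝ | p ∈ Q ∧ H p ≤ d} (-1, -1)}) :
    -- top edge
    ((∃! x : ℝ, x ∈ Set.Icc (-1:ℝ) 2 ∧ H (x, 2) = c) ∧
      (∀ x ∈ Set.Icc (-1:ℝ) 2, H (x, 2) = c → x ∈ Set.Ioo (-1:ℝ) 2)) ∧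
    -- bottom edge
    ((∃! x : ℝ, x ∈ Set.Icc (-1:ℝ) 2 ∧ H (x, -1) = c) ∧
      (∀ x ∈ Set.Icc (-1:ℝ) 2, H (x, -1) = c → x ∈ Set.Ioo (-1:ℝ) 2)) ∧
    -- left edge
    ((∃! y : ℝ, y ∈ Set.Icc (-1:ℝ) 2 ∧ H (-1, y) = c) ∧
      (∀ y ∈ Set.Icc (-1:ℝ) 2, H (-1, y) = c → y ∈ Set.Ioo (-1:ℝ) 2)) ∧
    -- right edge
    ((∃! y : ℝ, y ∈ Set.Icc (-1:ℝ) 2 ∧ H (2, y) = c) ∧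
      (∀ y ∈ Set.Icc (-1:ℝ) 2, H (2, y) = c → y ∈ Set.Ioo (-1:ℝ) 2)) := by
  have hHp : ∀ p : ℝ × ℝ, H p = F p.1 + G p.2 - p.1 * p.2 := fun p => hH p.1 p.2
  have hQmem : ∀ p : ℝ × ℝ, p ∈ Q ↔ ((-1 ≤ p.1 ∧ p.1 ≤ 2) ∧ (-1 ≤ p.2 ∧ p.2 ≤ 2)) := by
    intro p; rw [hQ, Set.mem_prod, Set.mem_Icc, Set.mem_Icc]
  have monoF : Monotone F := hd_monotone hF fun x => (hf x).1
  have monoG : Monotone G := hd_monotone hG fun y => (hg y).1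
  have lipF : ∀ {a b : ℝ}, a ≤ b → F b - F a ≤ b - a :=
    fun h => hd_lip hF (fun x => (hf x).2) h
  have lipG : ∀ {a b : ℝ}, a ≤ b → G b - G a ≤ b - a :=
    fun h => hd_lip hG (fun y => (hg y).2) h
  set S : Set ℝ := {d : ℝ | ((2:ℝ), (2:ℝ)) ∈
      connectedComponentIn {p : ℝ × ℝ | p ∈ Q ∧ H p ≤ d} (-1, -1)} with hS
  -- lower bound near corner A = (-1,-1)
  have lb1 : ∀ d ∈ S, F (-1) + G (-1) - 1 + 1/2 ≤ d := by
    intro d hd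
    rw [hS, mem_setOf_eq] at hd
    by_contra hcon
    push_neg at hcon
    set T := {p : ℝ × ℝ | p ∈ Q ∧ H p ≤ d} with hT
    have hA : ((-1:ℝ), (-1:ℝ)) ∈ T := by
      by_contra hA
      rw [connectedComponentIn_eq_empty hA] at hd
      exact hd
    set U : Set (ℝ × ℝ) := {p | p.1 < -1/2} ∩ {p | p.2 < -1/2} with hU
    set V : Set (ℝ × ℝ) := {p | -1/2 < p.1} ∪ {p | -1/2 < p.2} with hV
    have hUo : IsOpen U :=
      (isOpen_lt continuous_fst continuous_const).inter
        (isOpen_lt continuous_snd continuous_const)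
    have hVo : IsOpen V :=
      (isOpen_lt continuous_const continuous_fst).union
        (isOpen_lt continuous_const continuous_snd)
    have hsub : connectedComponentIn T (-1, -1) ⊆ U ∪ V := by
      intro p hp
      obtain ⟨hpQ, hpH⟩ := connectedComponentIn_subset T _ hp
      rw [hQmem] at hpQ
      rw [hHp] at hpH
      by_contra hnot
      simp only [hU, hV, Set.mem_union, Set.mem_inter_iff, Set.mem_setOf_eq,
        not_or, not_and_or, not_lt] at hnot
      obtain ⟨h1, h2, h3⟩ := hnot
      have e1 : F (-1) ≤ F p.1 := monoF hpQ.1.1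
      have e2 : G (-1) ≤ G p.2 := monoG hpQ.2.1
      rcases h1 with h1 | h1
      · have hx : p.1 = -1/2 := le_antisymm h2 h1
        nlinarith [hpQ.2.1]
      · have hy : p.2 = -1/2 := le_antisymm h3 h1
        nlinarith [hpQ.1.1]
    obtain ⟨q, _, hqU, hqV⟩ :=
      isPreconnected_connectedComponentIn U V hUo hVo hsub
        ⟨(-1, -1), mem_connectedComponentIn hA, by constructor <;> norm_num⟩
        ⟨(2, 2), hd, Or.inl (by norm_num)⟩
    simp only [hU, hV, mem_inter_iff, mem_union, mem_setOf_eq] at hqU hqV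
    rcases hqV with h | h <;> linarith [hqU.1, hqU.2]
  -- lower bound near corner D = (2,2)
  have lb2 : ∀ d ∈ S, F 2 + G 2 - 4 + 1/2 ≤ d := by
    intro d hd
    rw [hS, mem_setOf_eq] at hd
    by_contra hcon
    push_neg at hcon
    set T := {p : ℝ × ℝ | p ∈ Q ∧ H p ≤ d} with hT
    have hA : ((-1:ℝ), (-1:ℝ)) ∈ T := by
      by_contra hA
      rw [connectedComponentIn_eq_empty hA] at hd
      exact hd
    set U : Set (ℝ × ℝ) := {p | (3:ℝ)/2 < p.1} ∩ {p | (3:ℝ)/2 < p.2} with hU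
    set V : Set (ℝ × ℝ) := {p | p.1 < (3:ℝ)/2} ∪ {p | p.2 < (3:ℝ)/2} with hV
    have hUo : IsOpen U :=
      (isOpen_lt continuous_const continuous_fst).inter
        (isOpen_lt continuous_const continuous_snd)
    have hVo : IsOpen V :=
      (isOpen_lt continuous_fst continuous_const).union
        (isOpen_lt continuous_snd continuous_const)
    have hsub : connectedComponentIn T (-1, -1) ⊆ U ∪ V := by
      intro p hp
      obtain ⟨hpQ, hpH⟩ := connectedComponentIn_subset T _ hp
      rw [hQmem] at hpQ
      rw [hHp] at hpH
      by_contra hnot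
      simp only [hU, hV, Set.mem_union, Set.mem_inter_iff, Set.mem_setOf_eq,
        not_or, not_and_or, not_lt] at hnot
      obtain ⟨h1, h2, h3⟩ := hnot
      have e1 : F 2 - F p.1 ≤ 2 - p.1 := lipF hpQ.1.2
      have e2 : G 2 - G p.2 ≤ 2 - p.2 := lipG hpQ.2.2
      rcases h1 with h1 | h1
      · have hx : p.1 = 3/2 := le_antisymm h1 h2
        nlinarith [hpQ.2.2]
      · have hy : p.2 = 3/2 := le_antisymm h1 h3
        nlinarith [hpQ.1.2]
    obtain ⟨q, _, hqU, hqV⟩ :=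
      isPreconnected_connectedComponentIn U V hUo hVo hsub
        ⟨(2, 2), hd, by constructor <;> norm_num⟩
        ⟨(-1, -1), mem_connectedComponentIn hA, Or.inl (by norm_num)⟩
    simp only [hU, hV, mem_inter_iff, mem_union, mem_setOf_eq] at hqU hqV
    rcases hqV with h | h <;> linarith [hqU.1, hqU.2]
  -- path through corner B = (2,-1), cut at x = 3/2
  have hm1 : (F 2 + G (-1) + 2 - 1/2) ∈ S := by
    rw [hS, mem_setOf_eq]
    set m : ℝ := F 2 + G (-1) + 2 - 1/2 with hm
    set P : Set (ℝ × ℝ) :=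
      (Icc (-1:ℝ) (3/2) ×ˢ {(-1:ℝ)}) ∪
        (({(3/2:ℝ)} ×ˢ Icc (-1:ℝ) 2) ∪ (Icc (3/2:ℝ) 2 ×ˢ {(2:ℝ)})) with hP
    have hpre : IsPreconnected P := by
      apply IsPreconnected.union ((3:ℝ)/2, (-1:ℝ))
      · exact ⟨by norm_num [mem_Icc], rfl⟩
      · exact Or.inl ⟨rfl, by norm_num [mem_Icc]⟩
      · exact isPreconnected_Icc.prod isPreconnected_singleton
      · apply IsPreconnected.union ((3:ℝ)/2, (2:ℝ))
        · exact ⟨rfl, by norm_num [mem_Icc]⟩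
        · exact ⟨by norm_num [mem_Icc], rfl⟩
        · exact isPreconnected_singleton.prod isPreconnected_Icc
        · exact isPreconnected_Icc.prod isPreconnected_singleton
    have hsub : P ⊆ {p : ℝ × ℝ | p ∈ Q ∧ H p ≤ m} := by
      rintro p hp
      rcases hp with ⟨h1, h2⟩ | ⟨h1, h2⟩ | ⟨h1, h2⟩
      · -- bottom: p.1 ∈ [-1,3/2], p.2 = -1
        rw [mem_Icc] at h1
        rw [mem_singleton_iff] at h2
        have e1 : F p.1 ≤ F 2 := monoF (by linarith)
        refine ⟨(hQmem p).2 ⟨⟨h1.1, by linarith⟩, by rw [h2]; norm_num⟩, ?_⟩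
        rw [hHp, h2, hm]
        nlinarith
      · -- vertical: p.1 = 3/2, p.2 ∈ [-1,2]
        rw [mem_singleton_iff] at h1
        rw [mem_Icc] at h2
        have e1 : F ((3:ℝ)/2) ≤ F 2 := monoF (by norm_num)
        have e2 : G p.2 - G (-1) ≤ p.2 - (-1) := lipG h2.1
        refine ⟨(hQmem p).2 ⟨by rw [h1]; norm_num, ⟨h2.1, h2.2⟩⟩, ?_⟩
        rw [hHp, h1, hm]
        nlinarith [h2.1, h2.2]
      · -- top: p.1 ∈ [3/2,2], p.2 = 2
        rw [mem_Icc] at h1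
        rw [mem_singleton_iff] at h2
        have e1 : F p.1 ≤ F 2 := monoF h1.2
        have e2 : G 2 - G (-1) ≤ 2 - (-1) := lipG (by norm_num)
        refine ⟨(hQmem p).2 ⟨⟨by linarith, h1.2⟩, by rw [h2]; norm_num⟩, ?_⟩
        rw [hHp, h2, hm]
        nlinarith
    have hAP : ((-1:ℝ), (-1:ℝ)) ∈ P := Or.inl ⟨by norm_num [mem_Icc], rfl⟩
    have hDP : ((2:ℝ), (2:ℝ)) ∈ P := Or.inr (Or.inr ⟨by norm_num [mem_Icc], rfl⟩)
    exact hpre.subset_connectedComponentIn hAP hsub hDP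
  -- path through corner C = (-1,2), cut at y = 3/2
  have hm2 : (F (-1) + G 2 + 2 - 1/2) ∈ S := by
    rw [hS, mem_setOf_eq]
    set m : ℝ := F (-1) + G 2 + 2 - 1/2 with hm
    set P : Set (ℝ × ℝ) :=
      ({(-1:ℝ)} ×ˢ Icc (-1:ℝ) (3/2)) ∪
        ((Icc (-1:ℝ) 2 ×ˢ {(3/2:ℝ)}) ∪ ({(2:ℝ)} ×ˢ Icc (3/2:ℝ) 2)) with hP
    have hpre : IsPreconnected P := by
      apply IsPreconnected.union ((-1:ℝ), (3:ℝ)/2)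
      · exact ⟨rfl, by norm_num [mem_Icc]⟩
      · exact Or.inl ⟨by norm_num [mem_Icc], rfl⟩
      · exact isPreconnected_singleton.prod isPreconnected_Icc
      · apply IsPreconnected.union ((2:ℝ), (3:ℝ)/2)
        · exact ⟨by norm_num [mem_Icc], rfl⟩
        · exact ⟨rfl, by norm_num [mem_Icc]⟩
        · exact isPreconnected_Icc.prod isPreconnected_singleton
        · exact isPreconnected_singleton.prod isPreconnected_Icc
    have hsub : P ⊆ {p : ℝ × ℝ | p ∈ Q ∧ H p ≤ m} := by
      rintro p hp
      rcases hp with ⟨h1, h2⟩ | ⟨h1, h2⟩ | ⟨h1, h2⟩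
      · -- left: p.1 = -1, p.2 ∈ [-1,3/2]
        rw [mem_singleton_iff] at h1
        rw [mem_Icc] at h2
        have e1 : G p.2 ≤ G 2 := monoG (by linarith)
        refine ⟨(hQmem p).2 ⟨by rw [h1]; norm_num, ⟨h2.1, by linarith⟩⟩, ?_⟩
        rw [hHp, h1, hm]
        nlinarith
      · -- horizontal: p.1 ∈ [-1,2], p.2 = 3/2
        rw [mem_Icc] at h1
        rw [mem_singleton_iff] at h2
        have e1 : G ((3:ℝ)/2) ≤ G 2 := monoG (by norm_num)
        have e2 : F p.1 - F (-1) ≤ p.1 - (-1) := lipF h1.1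
        refine ⟨(hQmem p).2 ⟨⟨h1.1, h1.2⟩, by rw [h2]; norm_num⟩, ?_⟩
        rw [hHp, h2, hm]
        nlinarith [h1.1, h1.2]
      · -- right: p.1 = 2, p.2 ∈ [3/2,2]
        rw [mem_singleton_iff] at h1
        rw [mem_Icc] at h2
        have e1 : G p.2 ≤ G 2 := monoG h2.2
        have e2 : F 2 - F (-1) ≤ 2 - (-1) := lipF (by norm_num)
        refine ⟨(hQmem p).2 ⟨by rw [h1]; norm_num, ⟨by linarith, h2.2⟩⟩, ?_⟩
        rw [hHp, h1, hm]
        nlinarith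
    have hAP : ((-1:ℝ), (-1:ℝ)) ∈ P := Or.inl ⟨rfl, by norm_num [mem_Icc]⟩
    have hDP : ((2:ℝ), (2:ℝ)) ∈ P := Or.inr (Or.inr ⟨rfl, by norm_num [mem_Icc]⟩)
    exact hpre.subset_connectedComponentIn hAP hsub hDP
  have hbdd : BddBelow S := ⟨F (-1) + G (-1) - 1 + 1/2, fun d hd => lb1 d hd⟩
  have hne : S.Nonempty := ⟨_, hm1⟩
  have hc1 : F (-1) + G (-1) - 1 + 1/2 ≤ c := hc ▸ le_csInf hne lb1
  have hc2 : F 2 + G 2 - 4 + 1/2 ≤ c := hc ▸ le_csInf hne lb2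
  have hc3 : c ≤ F 2 + G (-1) + 2 - 1/2 := hc ▸ csInf_le hbdd hm1
  have hc4 : c ≤ F (-1) + G 2 + 2 - 1/2 := hc ▸ csInf_le hbdd hm2
  -- edge derivatives
  have dtop : ∀ x : ℝ, HasDerivAt (fun x => F x + G 2 - x * 2) (f x - 1 * 2) x :=
    fun x => ((hF x).add_const (G 2)).sub ((hasDerivAt_id x).mul_const 2)
  have dbot : ∀ x : ℝ, HasDerivAt (fun x => F x + G (-1) - x * (-1)) (f x - 1 * (-1)) x :=
    fun x => ((hF x).add_const (G (-1))).sub ((hasDerivAt_id x).mul_const (-1))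
  have dleft : ∀ y : ℝ, HasDerivAt (fun y => F (-1) + G y - (-1) * y) (g y - (-1) * 1) y :=
    fun y => ((hG y).const_add (F (-1))).sub ((hasDerivAt_id y).const_mul (-1))
  have dright : ∀ y : ℝ, HasDerivAt (fun y => F 2 + G y - 2 * y) (g y - 2 * 1) y :=
    fun y => ((hG y).const_add (F 2)).sub ((hasDerivAt_id y).const_mul 2)
  simp only [hH]
  refine ⟨?_, ?_, ?_, ?_⟩
  · exact edge_anti (hd_strictAnti dtop fun x => by linarith [(hf x).2])
      (hd_cont dtop) (by linarith) (by linarith)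
  · exact edge_mono (hd_strictMono dbot fun x => by linarith [(hf x).1])
      (hd_cont dbot) (by linarith) (by linarith)
  · exact edge_mono (hd_strictMono dleft fun y => by linarith [(hg y).1])
      (hd_cont dleft) (by linarith) (by linarith)
  · exact edge_anti (hd_strictAnti dright fun y => by linarith [(hg y).2])
      (hd_cont dright) (by linarith) (by linarith)
end

section
/- Every connected component of the set {(x,y) ∈ Q : H(x,y) ≠ c} intersects the boundary ∂Q of the square Q. -/
open Set

/-- Every connected component of `{p ∈ Q : H p ≠ c}` intersects the boundary
of the square `Q`. -/
theorem every_component_meets_boundary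
    (F G f g : ℝ → ℝ)
    (hF : ∀ x, HasDerivAt F (f x) x) (hG : ∀ y, HasDerivAt G (g y) y)
    (hf : ∀ x, f x ∈ Set.Icc (0:ℝ) 1) (hg : ∀ y, g y ∈ Set.Icc (0:ℝ) 1)
    (H : ℝ × ℝ → ℝ) (hH : ∀ x y : ℝ, H (x, y) = F x + G y - x * y)
    (hgrad : ∀ x y : ℝ, (f x - y, g y - x) ≠ ((0:ℝ), (0:ℝ)))
    (Q : Set (ℝ × ℝ)) (hQ : Q = Set.Icc (-1:ℝ) 2 ×ˢ Set.Icc (-1:ℝ) 2)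
    (c : ℝ)
    (hc : c = sInf {d : ℝ | ((2:ℝ), (2:ℝ)) ∈
      connectedComponentIn {p : ℝ × ℝ | p ∈ Q ∧ H p ≤ d} (-1, -1)})
    (S : Set (ℝ × ℝ)) (hS : S = {p : ℝ × ℝ | p ∈ Q ∧ H p ≠ c}) :
    ∀ p ∈ S, (connectedComponentIn S p ∩ frontier Q).Nonempty := by
  intro p hpS
  by_contra hempty
  rw [Set.not_nonempty_iff_eq_empty] at hempty
  set C := connectedComponentIn S p with hCdef
  have hpC : p ∈ C := mem_connectedComponentIn hpS
  have hCS : C ⊆ S := connectedComponentIn_subset S p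
  have hCconn : IsPreconnected C := isPreconnected_connectedComponentIn
  have hHfun : H = fun q : ℝ × ℝ => F q.1 + G q.2 - q.1 * q.2 := by
    funext q
    rw [← Prod.mk.eta (p := q), hH]
  have hFc : Continuous F :=
    (Differentiable.continuous (fun x => (hF x).differentiableAt))
  have hGc : Continuous G :=
    (Differentiable.continuous (fun y => (hG y).differentiableAt))
  have hHcont : Continuous H := by
    rw [hHfun]
    exact ((hFc.comp continuous_fst).add (hGc.comp continuous_snd)).sub
      (continuous_fst.mul continuous_snd)
  have hQclosed : IsClosed Q := by
    rw [hQ]; exact isClosed_Icc.prod isClosed_Icc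
  have hQcomp : IsCompact Q := by
    rw [hQ]; exact isCompact_Icc.prod isCompact_Icc
  have hCQ : C ⊆ Q := fun z hz => by
    have := hCS hz; rw [hS] at this; exact this.1
  -- C avoids frontier Q, so C ⊆ interior Q
  have hCint : C ⊆ interior Q := by
    intro z hz
    by_contra hzint
    have hzfr : z ∈ frontier Q := by
      rw [hQclosed.frontier_eq]
      exact ⟨hCQ hz, hzint⟩
    have : z ∈ C ∩ frontier Q := ⟨hz, hzfr⟩
    rw [hempty] at this
    exact this
  -- C is open
  set U := interior Q ∩ {q : ℝ × ℝ | H q ≠ c} with hUdef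
  have hUopen : IsOpen U :=
    isOpen_interior.inter ((isOpen_compl_singleton).preimage hHcont)
  have hCU : C ⊆ U := fun z hz => ⟨hCint hz, by
    have := hCS hz; rw [hS] at this; exact this.2⟩
  have hUS : U ⊆ S := fun z hz => by
    rw [hS]; exact ⟨interior_subset hz.1, hz.2⟩
  have hCeq : C = connectedComponentIn U p := by
    apply subset_antisymm
    · exact hCconn.subset_connectedComponentIn hpC hCU
    · exact (connectedComponentIn_mono p hUS).trans (le_refl C)
  have hCopen : IsOpen C := by
    rw [hCeq]; exact hUopen.connectedComponentIn
  -- closure C is compact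
  have hclCQ : closure C ⊆ Q := closure_minimal hCQ hQclosed
  have hclComp : IsCompact (closure C) :=
    hQcomp.of_isClosed_subset isClosed_closure hclCQ
  -- C is closed in S
  have hclS : closure C ∩ S ⊆ C := by
    rintro z ⟨hz1, hz2⟩
    have hins : IsPreconnected (insert z C) :=
      hCconn.subset_closure (subset_insert z C)
        (insert_subset_iff.mpr ⟨hz1, subset_closure⟩)
    have hsub : insert z C ⊆ S := insert_subset_iff.mpr ⟨hz2, hCS⟩
    have := hins.subset_connectedComponentIn (mem_insert_of_mem z hpC) hsub
    exact this (mem_insert z C)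
  -- H - c has constant sign on C
  have hsign : (∀ z ∈ C, c < H z) ∨ (∀ z ∈ C, H z < c) := by
    by_contra hcon
    push_neg at hcon
    obtain ⟨⟨z1, hz1, hz1le⟩, z2, hz2, hz2le⟩ := hcon
    have hIcc : Icc (H z1) (H z2) ⊆ H '' C :=
      hCconn.intermediate_value hz1 hz2 hHcont.continuousOn
    have hcmem : c ∈ Icc (H z1) (H z2) := ⟨hz1le, hz2le⟩
    obtain ⟨w, hw, hwc⟩ := hIcc hcmem
    have := hCS hw; rw [hS] at this
    exact this.2 hwc
  -- the derivative of H at any point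
  have hderiv : ∀ q : ℝ × ℝ, HasFDerivAt H
      ((((1 : ℝ →L[ℝ] ℝ).smulRight (f q.1)).comp (ContinuousLinearMap.fst ℝ ℝ ℝ)
        + ((1 : ℝ →L[ℝ] ℝ).smulRight (g q.2)).comp (ContinuousLinearMap.snd ℝ ℝ ℝ))
        - (q.1 • ContinuousLinearMap.snd ℝ ℝ ℝ + q.2 • ContinuousLinearMap.fst ℝ ℝ ℝ)) q := by
    intro q
    rw [hHfun]
    exact (((hF q.1).hasFDerivAt.comp q (hasFDerivAt_fst)).add
      ((hG q.2).hasFDerivAt.comp q (hasFDerivAt_snd))).sub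
      ((hasFDerivAt_fst).mul (hasFDerivAt_snd))
  have hcrit : ∀ q : ℝ × ℝ, ¬ (IsLocalMax H q ∨ IsLocalMin H q) := by
    rintro q (hmax | hmin) <;>
    · first
      | have hL0 := hmax.hasFDerivAt_eq_zero (hderiv q)
      | have hL0 := hmin.hasFDerivAt_eq_zero (hderiv q)
      have h1 := congrArg (fun L : (ℝ × ℝ) →L[ℝ] ℝ => L (1, 0)) hL0
      have h2 := congrArg (fun L : (ℝ × ℝ) →L[ℝ] ℝ => L (0, 1)) hL0
      simp at h1 h2
      exact hgrad q.1 q.2 (by rw [Prod.mk.injEq]; constructor <;> [linarith; linarith])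
  -- now derive the contradiction
  have hclne : (closure C).Nonempty := ⟨p, subset_closure hpC⟩
  rcases hsign with hpos | hneg
  · obtain ⟨q, hqcl, hqmax⟩ := hclComp.exists_isMaxOn hclne hHcont.continuousOn
    have hHq : c < H q := lt_of_lt_of_le (hpos p hpC) (hqmax (subset_closure hpC))
    have hqC : q ∈ C := hclS ⟨hqcl, by rw [hS]; exact ⟨hclCQ hqcl, ne_of_gt hHq⟩⟩
    have hlm : IsLocalMax H q := by
      filter_upwards [hCopen.mem_nhds hqC] with z hz using hqmax (subset_closure hz)
    exact hcrit q (Or.inl hlm)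
  · obtain ⟨q, hqcl, hqmin⟩ := hclComp.exists_isMinOn hclne hHcont.continuousOn
    have hHq : H q < c := lt_of_le_of_lt (hqmin (subset_closure hpC)) (hneg p hpC)
    have hqC : q ∈ C := hclS ⟨hqcl, by rw [hS]; exact ⟨hclCQ hqcl, ne_of_lt hHq⟩⟩
    have hlm : IsLocalMin H q := by
      filter_upwards [hCopen.mem_nhds hqC] with z hz using hqmin (subset_closure hz)
    exact hcrit q (Or.inr hlm)
end

section
/- There exists a point p in {(x,y) ∈ Q : H(x,y) = c} lying in the interior of Q such that p belongs to the closures of at least three distinct connected components of {(x,y) ∈ Q : H(x,y) ≠ c}. -/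
open Set

variable {α : Type*} [TopologicalSpace α]

/-- The connected component in a compact set is compact. -/
theorem aux_isCompact_connectedComponentIn [T2Space α] {s : Set α} (hs : IsCompact s) (x : α) :
    IsCompact (connectedComponentIn s x) := by
  by_cases hx : x ∈ s
  · rw [connectedComponentIn_eq_image hx]
    have : CompactSpace s := isCompact_iff_compactSpace.mp hs
    exact (isClosed_connectedComponent.isCompact).image continuous_subtype_val
  · rw [connectedComponentIn_eq_empty hx]; exact isCompact_empty

/-- A decreasing intersection of compact connected sets is preconnected. -/
theorem aux_isPreconnected_iInter [T2Space α] {K : ℕ → Set α}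
    (hcomp : ∀ n, IsCompact (K n)) (hconn : ∀ n, IsPreconnected (K n))
    (hanti : ∀ n, K (n + 1) ⊆ K n) : IsPreconnected (⋂ n, K n) := by
  have hclosed : ∀ n, IsClosed (K n) := fun n => (hcomp n).isClosed
  have hLclosed : IsClosed (⋂ n, K n) := isClosed_iInter hclosed
  rw [isPreconnected_iff_subset_of_fully_disjoint_closed hLclosed]
  intro t₁ t₂ ht₁ ht₂ hsub hdisj
  set L := ⋂ n, K n with hL
  have hLcomp : IsCompact L := (hcomp 0).of_isClosed_subset hLclosed (iInter_subset _ 0)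
  -- separate the two pieces by open sets
  obtain ⟨u, v, hu, hv, h1u, h2v, huv⟩ :=
    SeparatedNhds.of_isCompact_isCompact (hLcomp.inter_right ht₁) (hLcomp.inter_right ht₂)
      (hdisj.mono inter_subset_right inter_subset_right)
  have hLuv : L ⊆ u ∪ v := fun z hz => by
    rcases hsub hz with h | h
    · exact Or.inl (h1u ⟨hz, h⟩)
    · exact Or.inr (h2v ⟨hz, h⟩)
  -- some K N is contained in u ∪ v
  have hmono : ∀ m n, m ≤ n → K n ⊆ K m := by
    intro m n hmn
    induction n, hmn using Nat.le_induction with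
    | base => exact subset_rfl
    | succ n hmn ih => exact (hanti n).trans ih
  have : ∃ N, K N ⊆ u ∪ v := by
    by_contra hcon
    push_neg at hcon
    have hne : ∀ n, (K n \ (u ∪ v)).Nonempty := by
      intro n
      rcases not_subset.mp (hcon n) with ⟨z, hz, hz'⟩
      exact ⟨z, hz, hz'⟩
    have hdir : Directed (· ⊇ ·) (fun n => K n \ (u ∪ v)) := by
      intro m n
      refine ⟨max m n, diff_subset_diff_left (hmono _ _ (le_max_left _ _)),
        diff_subset_diff_left (hmono _ _ (le_max_right _ _))⟩
    obtain ⟨z, hz⟩ := IsCompact.nonempty_iInter_of_directed_nonempty_isCompact_isClosed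
      (fun n => K n \ (u ∪ v)) hdir hne
      (fun n => (hcomp n).diff (hu.union hv))
      (fun n => (hclosed n).sdiff (hu.union hv))
    rw [mem_iInter] at hz
    have hzL : z ∈ L := mem_iInter.mpr fun n => (hz n).1
    exact (hz 0).2 (hLuv hzL)
  obtain ⟨N, hN⟩ := this
  -- K N is preconnected, so it lies entirely in u or in v
  have hKNu : K N ∩ (u ∩ v) = ∅ := by
    rw [← subset_empty_iff]
    intro z hz
    exact (huv.le_bot ⟨hz.2.1, hz.2.2⟩ : z ∈ (∅ : Set α))
  have := (hconn N) u v hu hv hN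
  have hcases : K N ∩ u = ∅ ∨ K N ∩ v = ∅ := by
    by_contra hc
    push_neg at hc
    obtain ⟨z, hz⟩ := this hc.1 hc.2
    rw [hKNu] at hz
    exact hz
  have hLK : L ⊆ K N := iInter_subset _ N
  rcases hcases with h | h
  · -- K N ∩ u = ∅, so L ∩ t₁ ⊆ u gives L ∩ t₁ = ∅, hence L ⊆ t₂
    right
    intro z hz
    rcases hsub hz with h1 | h2
    · have hmem : z ∈ K N ∩ u := ⟨hLK hz, h1u ⟨hz, h1⟩⟩
      rw [h] at hmem
      exact hmem.elim
    · exact h2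
  · left
    intro z hz
    rcases hsub hz with h1 | h2
    · exact h1
    · have hmem : z ∈ K N ∩ v := ⟨hLK hz, h2v ⟨hz, h2⟩⟩
      rw [h] at hmem
      exact hmem.elim

/-- Boundary bumping lemma: in a connected compact Hausdorff space, the connected
component of a point `x ∈ U` in `closure U` meets `closure U \ U`, provided
`closure U ≠ univ`. We output a suitable continuum. -/
theorem aux_bbl {γ : Type*} [TopologicalSpace γ] [CompactSpace γ] [T2Space γ] [ConnectedSpace γ]
    {U : Set γ} (hU : IsOpen U) (hprop : closure U ≠ univ) {x : γ} (hx : x ∈ U) :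
    ∃ D : Set γ, IsCompact D ∧ IsPreconnected D ∧ x ∈ D ∧ D ⊆ closure U ∧
      (D ∩ (closure U \ U)).Nonempty := by
  classical
  set Fc := closure U with hFc
  have hFccl : IsClosed Fc := isClosed_closure
  have : CompactSpace Fc := isCompact_iff_compactSpace.mp (hFccl.isCompact)
  set xt : Fc := ⟨x, subset_closure hx⟩ with hxt
  refine ⟨(↑) '' connectedComponent xt, (isClosed_connectedComponent.isCompact).image
      continuous_subtype_val,
    isPreconnected_connectedComponent.image _ continuous_subtype_val.continuousOn,
    ⟨xt, mem_connectedComponent, rfl⟩, by rintro w ⟨wt, _, rfl⟩; exact wt.2, ?_⟩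
  by_contra hcon
  rw [not_nonempty_iff_eq_empty] at hcon
  -- the set B of "frontier" points, pulled back to the subtype
  set Bt : Set Fc := ((↑) : Fc → γ) ⁻¹' (Fc \ U) with hBt
  have hBtcl : IsClosed Bt := (hFccl.sdiff hU).preimage continuous_subtype_val
  have hBtcomp : IsCompact Bt := hBtcl.isCompact
  have hint : Bt ∩ ⋂ Z : { Z : Set Fc // IsClopen Z ∧ xt ∈ Z }, (Z : Set Fc) = ∅ := by
    rw [← connectedComponent_eq_iInter_isClopen xt]
    rw [eq_empty_iff_forall_notMem]
    rintro z ⟨hzB, hzcc⟩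
    have : (z : γ) ∈ ((↑) '' connectedComponent xt) ∩ (Fc \ U) := ⟨⟨z, hzcc, rfl⟩, hzB⟩
    rw [hcon] at this
    exact this
  obtain ⟨s, hs⟩ := hBtcomp.elim_finite_subfamily_closed _
    (fun Z : { Z : Set Fc // IsClopen Z ∧ xt ∈ Z } => Z.2.1.isClosed) hint
  set Z : Set Fc := ⋂ i ∈ s, (i : Set Fc) with hZ
  have hZclopen : IsClopen Z := isClopen_biInter_finset fun i _ => i.2.1
  have hxZ : xt ∈ Z := mem_iInter₂.mpr fun i _ => i.2.2
  have hZB : Bt ∩ Z = ∅ := hs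
  obtain ⟨O, hO, hOZ⟩ := isOpen_induced_iff.mp hZclopen.isOpen
  -- push Z to an ambient clopen set
  set Z' : Set γ := (↑) '' Z with hZ'
  have hZ'comp : IsCompact Z' := (hZclopen.isClosed.isCompact).image continuous_subtype_val
  have hZ'cl : IsClosed Z' := hZ'comp.isClosed
  have hZ'U : Z' ⊆ U := by
    rintro w ⟨wt, hwt, rfl⟩
    by_contra hwU
    have : wt ∈ Bt ∩ Z := ⟨⟨wt.2, hwU⟩, hwt⟩
    rw [hZB] at this
    exact this
  have hZ'eq : Z' = O ∩ U := by
    apply Subset.antisymm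
    · rintro w ⟨wt, hwt, rfl⟩
      refine ⟨?_, hZ'U ⟨wt, hwt, rfl⟩⟩
      have : wt ∈ ((↑) : Fc → γ) ⁻¹' O := by rw [hOZ]; exact hwt
      exact this
    · rintro w ⟨hwO, hwU⟩
      have hwF : w ∈ Fc := subset_closure hwU
      refine ⟨⟨w, hwF⟩, ?_, rfl⟩
      rw [← hOZ]
      exact hwO
  have hZ'open : IsOpen Z' := hZ'eq ▸ hO.inter hU
  have hZ'univ : Z' = univ := IsClopen.eq_univ ⟨hZ'cl, hZ'open⟩ ⟨x, ⟨xt, hxZ, rfl⟩⟩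
  apply hprop
  apply Subset.antisymm (subset_univ _)
  rw [← hZ'univ] at *
  exact (hZ'U.trans subset_closure)

/-- Sierpiński's theorem, in the form we need: a nonempty compact connected set cannot be
covered by countably many closed sets that are pairwise disjoint (or equal), with at least
two distinct ones meeting it. -/
theorem aux_sierpinski {α : Type*} [TopologicalSpace α] [T2Space α]
    {K : Set α} (hK : IsCompact K) (hKc : IsPreconnected K)
    (E : ℕ → Set α) (hEcl : ∀ n, IsClosed (E n))
    (hdisj : ∀ m n, E m = E n ∨ Disjoint (E m) (E n))
    (hcover : K ⊆ ⋃ n, E n)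
    (i0 i1 : ℕ) (hne01 : E i0 ≠ E i1)
    (h0 : (K ∩ E i0).Nonempty) (h1 : (K ∩ E i1).Nonempty) : False := by
  classical
  set Inv : Set α → Prop := fun C => IsCompact C ∧ IsPreconnected C ∧ C ⊆ K ∧
    ∃ i j, E i ≠ E j ∧ (C ∩ E i).Nonempty ∧ (C ∩ E j).Nonempty with hInv
  have step : ∀ C, Inv C → ∀ n, ∃ D, Inv D ∧ D ⊆ C ∧ D ∩ E n = ∅ := by
    rintro C ⟨hCc, hCp, hCK, i, j, hij, hi, hj⟩ n
    by_cases hn : (C ∩ E n).Nonempty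
    · -- find an index k meeting C with E k ≠ E n
      obtain ⟨k, hkn, hk⟩ : ∃ k, E k ≠ E n ∧ (C ∩ E k).Nonempty := by
        by_cases hin : E i = E n
        · exact ⟨j, fun h => hij (hin.trans h.symm), hj⟩
        · exact ⟨i, hin, hi⟩
      have hPcomp : IsCompact (C ∩ E n) := hCc.inter_right (hEcl n)
      have hRcomp : IsCompact (C ∩ E k) := hCc.inter_right (hEcl k)
      have hdisjRP : Disjoint (C ∩ E k) (C ∩ E n) :=
        ((hdisj k n).resolve_left hkn).mono inter_subset_right inter_subset_right
      obtain ⟨u, v, hu, hv, hRu, hPv, huv⟩ :=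
        SeparatedNhds.of_isCompact_isCompact hRcomp hPcomp hdisjRP
      have hclu_v : closure u ∩ v = ∅ := by
        have h1 : u ⊆ vᶜ := fun z hz hzv => huv.le_bot ⟨hz, hzv⟩
        have h2 : closure u ⊆ vᶜ := closure_minimal h1 hv.isClosed_compl
        rw [eq_empty_iff_forall_notMem]
        rintro z ⟨hz1, hz2⟩
        exact h2 hz1 hz2
      -- work in the subtype C
      have hCconn : IsConnected C := ⟨⟨hk.some, hk.some_mem.1⟩, hCp⟩
      have : CompactSpace C := isCompact_iff_compactSpace.mp hCc
      have : ConnectedSpace C := Subtype.connectedSpace hCconn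
      set Ut : Set C := ((↑) : C → α) ⁻¹' u with hUt
      obtain ⟨x, hxC, hxk⟩ := hk
      have hxU : (⟨x, hxC⟩ : C) ∈ Ut := hRu ⟨hxC, hxk⟩
      have hclsub : closure Ut ⊆ ((↑) : C → α) ⁻¹' (closure u) :=
        Continuous.closure_preimage_subset continuous_subtype_val u
      have hprop : closure Ut ≠ univ := by
        obtain ⟨p, hpC, hpn⟩ := hn
        intro hcl
        have hp : (⟨p, hpC⟩ : C) ∈ closure Ut := by rw [hcl]; trivial
        have : p ∈ closure u := hclsub hp
        have : p ∈ closure u ∩ v := ⟨this, hPv ⟨hpC, hpn⟩⟩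
        rw [hclu_v] at this
        exact this
      obtain ⟨Dt, hDtc, hDtp, hxDt, hDtsub, yt, hyDt, hyU⟩ :=
        aux_bbl (hu.preimage continuous_subtype_val) hprop hxU
      refine ⟨(↑) '' Dt, ⟨hDtc.image continuous_subtype_val,
        hDtp.image _ continuous_subtype_val.continuousOn, ?_, ?_⟩, ?_, ?_⟩
      · rintro w ⟨wt, _, rfl⟩; exact hCK wt.2
      · -- meets two distinct sets
        have hyK : (yt : α) ∈ K := hCK yt.2
        obtain ⟨m, hm⟩ := mem_iUnion.mp (hcover hyK)
        refine ⟨k, m, ?_, ⟨x, ⟨⟨x, hxC⟩, hxDt, rfl⟩, hxk⟩, ⟨yt, ⟨yt, hyDt, rfl⟩, hm⟩⟩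
        intro hkm
        apply hyU.2
        have : (yt : α) ∈ C ∩ E k := ⟨yt.2, hkm ▸ hm⟩
        exact hRu this
      · rintro w ⟨wt, _, rfl⟩; exact wt.2
      · rw [eq_empty_iff_forall_notMem]
        rintro w ⟨⟨wt, hwt, rfl⟩, hwn⟩
        have h1 : (wt : α) ∈ closure u := hclsub (hDtsub hwt)
        have h2 : (wt : α) ∈ v := hPv ⟨wt.2, hwn⟩
        have : (wt : α) ∈ closure u ∩ v := ⟨h1, h2⟩
        rw [hclu_v] at this
        exact this
    · exact ⟨C, ⟨hCc, hCp, hCK, i, j, hij, hi, hj⟩, subset_rfl,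
        not_nonempty_iff_eq_empty.mp hn⟩
  choose! Fn hFn using step
  have invK : Inv K := ⟨hK, hKc, subset_rfl, i0, i1, hne01, h0, h1⟩
  let g : ℕ → {C : Set α // Inv C} := fun n =>
    Nat.rec ⟨K, invK⟩ (fun n p => ⟨Fn p.1 n, (hFn p.1 p.2 n).1⟩) n
  have hgs : ∀ n, (g (n + 1)).1 = Fn (g n).1 n := fun n => rfl
  have hgsub : ∀ n, (g (n + 1)).1 ⊆ (g n).1 := fun n => by
    rw [hgs n]; exact (hFn (g n).1 (g n).2 n).2.1
  have hgE : ∀ n, (g (n + 1)).1 ∩ E n = ∅ := fun n => by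
    rw [hgs n]; exact (hFn (g n).1 (g n).2 n).2.2
  have hgne : ∀ n, (g n).1.Nonempty := by
    intro n
    obtain ⟨_, _, _, i, j, _, hi, _⟩ := (g n).2
    exact ⟨hi.some, hi.some_mem.1⟩
  obtain ⟨z, hz⟩ := IsCompact.nonempty_iInter_of_sequence_nonempty_isCompact_isClosed
    (fun n => (g n).1) hgsub hgne ((g 0).2.1) (fun n => (g n).2.1.isClosed)
  rw [mem_iInter] at hz
  have hzK : z ∈ K := (g 0).2.2.2.1 (hz 0)
  obtain ⟨m, hm⟩ := mem_iUnion.mp (hcover hzK)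
  have : z ∈ (g (m + 1)).1 ∩ E m := ⟨hz (m + 1), hm⟩
  rw [hgE m] at this
  exact this

/-- In a convex closed set `Q`, if `O ⊆ Q` is relatively open and `b` is in the connected
component of `a` in `O`, then `a` and `b` lie in a common compact connected subset of `O`. -/
theorem aux_chain {Q O : Set (ℝ × ℝ)} (hQ : Convex ℝ Q) (hQc : IsClosed Q) (hOQ : O ⊆ Q)
    (hO : ∀ q ∈ O, ∃ ε > 0, Metric.closedBall q ε ∩ Q ⊆ O)
    {a b : ℝ × ℝ} (hb : b ∈ connectedComponentIn O a) :
    ∃ Z : Set (ℝ × ℝ), IsCompact Z ∧ IsPreconnected Z ∧ Z ⊆ O ∧ a ∈ Z ∧ b ∈ Z := by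
  classical
  have ha : a ∈ O := connectedComponentIn_nonempty_iff.mp ⟨b, hb⟩
  set C := connectedComponentIn O a with hC
  have hCO : C ⊆ O := connectedComponentIn_subset O a
  choose! ε hεpos hεsub using hO
  set piece : ℝ × ℝ → Set (ℝ × ℝ) := fun q => Metric.closedBall q (ε q) ∩ Q with hpiece
  have hpiece_conn : ∀ q, IsPreconnected (piece q) :=
    fun q => ((convex_closedBall q (ε q)).inter hQ).isPreconnected
  have hpiece_comp : ∀ q, IsCompact (piece q) :=
    fun q => (isCompact_closedBall q (ε q)).inter_right hQc
  have hpiece_mem : ∀ q ∈ O, q ∈ piece q := fun q hq =>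
    ⟨Metric.mem_closedBall_self (le_of_lt (hεpos q hq)), hOQ hq⟩
  have hpiece_sub : ∀ q ∈ O, piece q ⊆ O := fun q hq => hεsub q hq
  set W : Set (ℝ × ℝ) := {q | q ∈ C ∧ ∃ Z : Set (ℝ × ℝ),
    IsCompact Z ∧ IsPreconnected Z ∧ Z ⊆ O ∧ a ∈ Z ∧ q ∈ Z} with hW
  have haW : a ∈ W := ⟨mem_connectedComponentIn ha, {a}, isCompact_singleton,
    isPreconnected_singleton, singleton_subset_iff.mpr ha, rfl, rfl⟩
  have key1 : ∀ q ∈ W, ∀ q' ∈ C, dist q' q < ε q → q' ∈ W := by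
    rintro q ⟨hqC, Z, hZc, hZp, hZO, haZ, hqZ⟩ q' hq'C hdist
    have hqO : q ∈ O := hCO hqC
    refine ⟨hq'C, Z ∪ piece q, hZc.union (hpiece_comp q),
      hZp.union q hqZ (hpiece_mem q hqO) (hpiece_conn q),
      union_subset hZO (hpiece_sub q hqO), Or.inl haZ,
      Or.inr ⟨Metric.mem_closedBall.mpr (le_of_lt hdist), hOQ (hCO hq'C)⟩⟩
  have key2 : ∀ q ∈ C \ W, ∀ q' ∈ W, dist q' q < ε q → False := by
    rintro q ⟨hqC, hqW⟩ q' ⟨hq'C, Z, hZc, hZp, hZO, haZ, hq'Z⟩ hdist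
    have hqO : q ∈ O := hCO hqC
    apply hqW
    refine ⟨hqC, Z ∪ piece q, hZc.union (hpiece_comp q),
      hZp.union q' hq'Z ⟨Metric.mem_closedBall.mpr (le_of_lt hdist), hOQ (hCO hq'C)⟩
        (hpiece_conn q),
      union_subset hZO (hpiece_sub q hqO), Or.inl haZ,
      Or.inr (hpiece_mem q hqO)⟩
  by_contra hcon
  push_neg at hcon
  have hbW : b ∉ W := by
    intro hbW
    obtain ⟨_, Z, h1, h2, h3, h4, h5⟩ := hbW
    exact hcon Z h1 h2 h3 h4 h5
  set u : Set (ℝ × ℝ) := ⋃ q ∈ W, Metric.ball q (ε q) with hu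
  set v : Set (ℝ × ℝ) := ⋃ q ∈ C \ W, Metric.ball q (ε q) with hv
  have hCp : IsPreconnected C := isPreconnected_connectedComponentIn
  have huo : IsOpen u := isOpen_biUnion fun q _ => Metric.isOpen_ball
  have hvo : IsOpen v := isOpen_biUnion fun q _ => Metric.isOpen_ball
  have hCuv : C ⊆ u ∪ v := by
    intro q hq
    by_cases hqW : q ∈ W
    · exact Or.inl (mem_biUnion hqW (Metric.mem_ball_self (hεpos q (hCO hq))))
    · exact Or.inr (mem_biUnion ⟨hq, hqW⟩ (Metric.mem_ball_self (hεpos q (hCO hq))))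
  have hCu : (C ∩ u).Nonempty :=
    ⟨a, haW.1, mem_biUnion haW (Metric.mem_ball_self (hεpos a ha))⟩
  have hCv : (C ∩ v).Nonempty :=
    ⟨b, hb, mem_biUnion ⟨hb, hbW⟩ (Metric.mem_ball_self (hεpos b (hCO hb)))⟩
  obtain ⟨z, hzC, hzu, hzv⟩ := hCp u v huo hvo hCuv hCu hCv
  obtain ⟨q, hqW, hzq⟩ := mem_iUnion₂.mp hzu
  obtain ⟨q', hq'CW, hzq'⟩ := mem_iUnion₂.mp hzv
  have hzW : z ∈ W := key1 q hqW z hzC (Metric.mem_ball.mp hzq)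
  exact key2 q' hq'CW z hzW (Metric.mem_ball.mp hzq')

/-- Homeomorphisms commute with `connectedComponentIn`. -/
theorem aux_homeo_ccIn {α β : Type*} [TopologicalSpace α] [TopologicalSpace β]
    (h : α ≃ₜ β) (s : Set α) (x : α) :
    h '' connectedComponentIn s x = connectedComponentIn (h '' s) (h x) := by
  by_cases hx : x ∈ s
  · apply Subset.antisymm
    · exact h.continuous.image_connectedComponentIn_subset hx
    · intro y hy
      have h1 : h.symm '' connectedComponentIn (h '' s) (h x) ⊆
          connectedComponentIn (h.symm '' (h '' s)) (h.symm (h x)) :=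
        h.symm.continuous.image_connectedComponentIn_subset ⟨x, hx, rfl⟩
      have h2 : h.symm '' (h '' s) = s := by
        rw [← image_comp]
        simp
      rw [h2, h.symm_apply_apply] at h1
      have : h.symm y ∈ connectedComponentIn s x := h1 ⟨y, hy, rfl⟩
      exact ⟨h.symm y, this, h.apply_symm_apply y⟩
  · rw [connectedComponentIn_eq_empty hx, image_empty, connectedComponentIn_eq_empty]
    rintro ⟨x', hx', hxx⟩
    exact hx (h.injective hxx ▸ hx')

section Analysis

variable {F G f g : ℝ → ℝ} {H : ℝ × ℝ → ℝ}

theorem aux_Hcont (hF : ∀ x, HasDerivAt F (f x) x) (hG : ∀ y, HasDerivAt G (g y) y)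
    (hH : ∀ x y : ℝ, H (x, y) = F x + G y - x * y) : Continuous H := by
  have hFd : Differentiable ℝ F := fun x => (hF x).differentiableAt
  have hGd : Differentiable ℝ G := fun y => (hG y).differentiableAt
  have hFc : Continuous F := hFd.continuous
  have hGc : Continuous G := hGd.continuous
  have : H = fun p : ℝ × ℝ => F p.1 + G p.2 - p.1 * p.2 := funext fun p => hH p.1 p.2
  rw [this]
  fun_prop

theorem aux_hd1 (hF : ∀ x, HasDerivAt F (f x) x) (y : ℝ) (x : ℝ) :
    HasDerivAt (fun x => F x + G y - x * y) (f x - y) x := by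
  have h := ((hF x).add_const (G y)).sub ((hasDerivAt_id x).mul_const y)
  simpa [Pi.sub_def] using h

theorem aux_hd2 (hG : ∀ y, HasDerivAt G (g y) y) (x : ℝ) (y : ℝ) :
    HasDerivAt (fun y => F x + G y - x * y) (g y - x) y := by
  have h := ((hG y).const_add (F x)).sub ((hasDerivAt_id y).const_mul x)
  simpa [Pi.sub_def] using h

theorem aux_mono1 (hF : ∀ x, HasDerivAt F (f x) x) (hf : ∀ x, f x ∈ Icc (0:ℝ) 1)
    (hH : ∀ x y : ℝ, H (x, y) = F x + G y - x * y) {y : ℝ} (hy : y ≤ -(1:ℝ)/2)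
    {a b : ℝ} (hab : a < b) : H (a, y) < H (b, y) := by
  rw [hH a y, hH b y]
  have : StrictMono (fun x => F x + G y - x * y) := by
    apply strictMono_of_deriv_pos
    intro x
    rw [(aux_hd1 hF y x).deriv]
    have := (hf x).1
    linarith
  exact this hab

theorem aux_mono2 (hF : ∀ x, HasDerivAt F (f x) x) (hf : ∀ x, f x ∈ Icc (0:ℝ) 1)
    (hH : ∀ x y : ℝ, H (x, y) = F x + G y - x * y) {y : ℝ} (hy : (3:ℝ)/2 ≤ y)
    {a b : ℝ} (hab : a < b) : H (b, y) < H (a, y) := by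
  rw [hH a y, hH b y]
  have : StrictAnti (fun x => F x + G y - x * y) := by
    apply strictAnti_of_deriv_neg
    intro x
    rw [(aux_hd1 hF y x).deriv]
    have := (hf x).2
    linarith
  exact this hab

theorem aux_mono3 (hG : ∀ y, HasDerivAt G (g y) y) (hg : ∀ y, g y ∈ Icc (0:ℝ) 1)
    (hH : ∀ x y : ℝ, H (x, y) = F x + G y - x * y) {x : ℝ} (hx : x ≤ -(1:ℝ)/2)
    {a b : ℝ} (hab : a < b) : H (x, a) < H (x, b) := by
  rw [hH x a, hH x b]
  have : StrictMono (fun y => F x + G y - x * y) := by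
    apply strictMono_of_deriv_pos
    intro y
    rw [(aux_hd2 hG x y).deriv]
    have := (hg y).1
    linarith
  exact this hab

theorem aux_mono4 (hG : ∀ y, HasDerivAt G (g y) y) (hg : ∀ y, g y ∈ Icc (0:ℝ) 1)
    (hH : ∀ x y : ℝ, H (x, y) = F x + G y - x * y) {x : ℝ} (hx : (3:ℝ)/2 ≤ x)
    {a b : ℝ} (hab : a < b) : H (x, b) < H (x, a) := by
  rw [hH x a, hH x b]
  have : StrictAnti (fun y => F x + G y - x * y) := by
    apply strictAnti_of_deriv_neg
    intro y
    rw [(aux_hd2 hG x y).deriv]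
    have := (hg y).2
    linarith
  exact this hab

end Analysis

/-- The bottom-edge lemma: near a level point on the open bottom edge, all points of the
strict sublevel set close to it belong to one single connected component, whose closure
contains the level point. -/
theorem aux_edge (J : ℝ × ℝ → ℝ) (hJ : Continuous J) (c : ℝ)
    (mono : ∀ y a b : ℝ, -1 ≤ y → y ≤ -(1:ℝ)/2 → a < b → J (a, y) < J (b, y))
    {x₀ : ℝ} (hx₀ : x₀ ∈ Ioo (-1:ℝ) 2) (hc : J (x₀, -1) = c) :
    ∃ a₀ ∈ {q : ℝ × ℝ | q ∈ Icc (-1:ℝ) 2 ×ˢ Icc (-1:ℝ) 2 ∧ J q < c},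
      (x₀, (-1:ℝ)) ∈ closure (connectedComponentIn
          {q : ℝ × ℝ | q ∈ Icc (-1:ℝ) 2 ×ˢ Icc (-1:ℝ) 2 ∧ J q < c} a₀) ∧
      ∃ ρ > 0, ∀ q ∈ {q : ℝ × ℝ | q ∈ Icc (-1:ℝ) 2 ×ˢ Icc (-1:ℝ) 2 ∧ J q < c},
        dist q (x₀, (-1:ℝ)) < ρ → q ∈ connectedComponentIn
          {q : ℝ × ℝ | q ∈ Icc (-1:ℝ) 2 ×ˢ Icc (-1:ℝ) 2 ∧ J q < c} a₀ := by
  obtain ⟨hx₀1, hx₀2⟩ := hx₀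
  set low := {q : ℝ × ℝ | q ∈ Icc (-1:ℝ) 2 ×ˢ Icc (-1:ℝ) 2 ∧ J q < c} with hlow
  set r := min ((x₀ + 1)/2) ((2 - x₀)/2) with hr
  have hrpos : 0 < r := lt_min (by linarith) (by linarith)
  have hr1 : r ≤ (x₀ + 1)/2 := min_le_left _ _
  have hr2 : r ≤ (2 - x₀)/2 := min_le_right _ _
  set a1 := x₀ - r with ha1
  have ha1_gt : -1 < a1 := by simp only [ha1]; linarith
  have ha1_lt : a1 < x₀ := by simp only [ha1]; linarith
  have hJa1 : J (a1, -1) < c := hc ▸ mono (-1) a1 x₀ le_rfl (by norm_num) ha1_lt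
  -- continuity in the vertical direction at (a1, -1)
  have hopen : {y : ℝ | J (a1, y) < c} ∈ nhds (-1 : ℝ) :=
    (isOpen_lt (hJ.comp (Continuous.prodMk_right a1)) continuous_const).mem_nhds hJa1
  obtain ⟨δ, hδpos, hδ⟩ := Metric.mem_nhds_iff.mp hopen
  set δ' := min δ ((1:ℝ)/2) with hδ'
  have hδ'pos : 0 < δ' := lt_min hδpos (by norm_num)
  have hvert : ∀ y : ℝ, -1 ≤ y → y < -1 + δ' → J (a1, y) < c := by
    intro y hy1 hy2
    apply hδ
    rw [Metric.mem_ball, Real.dist_eq, abs_sub_comm, abs_of_nonpos (by linarith)]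
    have : y - (-1) < δ' := by linarith
    calc -(-1 - y) = y - (-1) := by ring
    _ < δ' := this
    _ ≤ δ := min_le_left _ _
  set ρ := min r δ' with hρ
  have hρpos : 0 < ρ := lt_min hrpos hδ'pos
  have hρr : ρ ≤ r := min_le_left _ _
  have hρδ : ρ ≤ δ' := min_le_right _ _
  have hδ'half : δ' ≤ 1/2 := min_le_right _ _
  set a₀ : ℝ × ℝ := (a1, -1) with ha₀
  have ha₀low : a₀ ∈ low := by
    refine ⟨⟨⟨le_of_lt ha1_gt, by linarith⟩, ⟨le_rfl, by norm_num⟩⟩, hJa1⟩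
  have main : ∀ q ∈ low, dist q (x₀, (-1:ℝ)) < ρ → q ∈ connectedComponentIn low a₀ := by
    intro q hq hdist
    obtain ⟨⟨⟨hqx1, hqx2⟩, ⟨hqy1, hqy2⟩⟩, hqJ⟩ := hq
    rw [Prod.dist_eq, max_lt_iff, Real.dist_eq, Real.dist_eq] at hdist
    obtain ⟨hdx, hdy⟩ := hdist
    rw [abs_lt] at hdx hdy
    simp only [] at hdx hdy
    norm_num at hdx hdy
    have hqx_gt : a1 < q.1 := by simp only [ha1]; linarith [hρr, hdx.1]
    have hqy_lt : q.2 < -1 + δ' := by linarith [hρδ, hdy.2]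
    have hqy_le : q.2 ≤ -(1:ℝ)/2 := by linarith
    -- two explicit segments
    set seg1 := (fun t : ℝ => (a1, t)) '' Icc (-1 : ℝ) q.2 with hseg1
    set seg2 := (fun s : ℝ => (s, q.2)) '' Icc a1 q.1 with hseg2
    have hseg1p : IsPreconnected seg1 :=
      isPreconnected_Icc.image _ (Continuous.continuousOn (by fun_prop))
    have hseg2p : IsPreconnected seg2 :=
      isPreconnected_Icc.image _ (Continuous.continuousOn (by fun_prop))
    have hmid1 : (a1, q.2) ∈ seg1 := ⟨q.2, ⟨hqy1, le_rfl⟩, rfl⟩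
    have hmid2 : (a1, q.2) ∈ seg2 := ⟨a1, ⟨le_rfl, le_of_lt hqx_gt⟩, rfl⟩
    have hZp : IsPreconnected (seg1 ∪ seg2) := hseg1p.union (a1, q.2) hmid1 hmid2 hseg2p
    have hZlow : seg1 ∪ seg2 ⊆ low := by
      rintro z (⟨t, ⟨ht1, ht2⟩, rfl⟩ | ⟨s, ⟨hs1, hs2⟩, rfl⟩)
      · refine ⟨⟨⟨le_of_lt ha1_gt, by linarith⟩, ⟨ht1, by linarith⟩⟩, ?_⟩
        exact hvert t ht1 (lt_of_le_of_lt ht2 hqy_lt)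
      · refine ⟨⟨⟨by linarith, le_trans hs2 hqx2⟩, ⟨hqy1, hqy2⟩⟩, ?_⟩
        rcases eq_or_lt_of_le hs2 with h | h
        · rw [h]; exact hqJ
        · exact lt_trans (mono q.2 s q.1 hqy1 hqy_le h) hqJ
    have ha₀Z : a₀ ∈ seg1 ∪ seg2 := Or.inl ⟨-1, ⟨le_rfl, hqy1⟩, rfl⟩
    have hqZ : q ∈ seg1 ∪ seg2 := Or.inr ⟨q.1, ⟨le_of_lt hqx_gt, le_rfl⟩, rfl⟩
    exact hZp.subset_connectedComponentIn ha₀Z hZlow hqZ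
  refine ⟨a₀, ha₀low, ?_, ρ, hρpos, main⟩
  rw [Metric.mem_closure_iff]
  intro ε hε
  set t := min (ε/2) (ρ/2) with ht
  have htpos : 0 < t := lt_min (by linarith) (by linarith)
  have ht1 : t ≤ ε/2 := min_le_left _ _
  have ht2 : t ≤ ρ/2 := min_le_right _ _
  set z : ℝ × ℝ := (x₀ - t, -1) with hz
  have hzlow : z ∈ low := by
    refine ⟨⟨⟨by simp only [hz]; nlinarith [hρr], by simp only [hz]; nlinarith⟩,
      ⟨le_rfl, by norm_num⟩⟩, ?_⟩
    exact hc ▸ mono (-1) (x₀ - t) x₀ le_rfl (by norm_num) (by linarith)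
  have hdistz : dist z (x₀, (-1:ℝ)) = t := by
    rw [Prod.dist_eq, Real.dist_eq, Real.dist_eq]
    simp only [hz]
    rw [show x₀ - t - x₀ = -t by ring, abs_neg, abs_of_pos htpos]
    simp [abs_of_nonneg, le_of_lt htpos]
  refine ⟨z, main z hzlow (by rw [hdistz]; linarith), ?_⟩
  rw [dist_comm, hdistz]
  linarith



/-- The reflection `(x, y) ↦ (1 - x, 1 - y)` as a homeomorphism of the plane. -/
noncomputable def auxRefl : (ℝ × ℝ) ≃ₜ (ℝ × ℝ) where
  toFun := fun p => (1 - p.1, 1 - p.2)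
  invFun := fun p => (1 - p.1, 1 - p.2)
  left_inv := fun p => by simp
  right_inv := fun p => by simp
  continuous_toFun := by fun_prop
  continuous_invFun := by fun_prop

theorem auxRefl_isometry : Isometry (auxRefl : (ℝ × ℝ) ≃ₜ (ℝ × ℝ)) := by
  apply Isometry.of_dist_eq
  intro p q
  simp only [auxRefl, Homeomorph.homeomorph_mk_coe, Equiv.coe_fn_mk]
  rw [Prod.dist_eq, Prod.dist_eq, Real.dist_eq, Real.dist_eq, Real.dist_eq, Real.dist_eq]
  congr 1 <;> rw [show ∀ a b : ℝ, 1 - a - (1 - b) = -(a - b) by intros; ring, abs_neg]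

theorem auxSwap_isometry : Isometry ((Homeomorph.prodComm ℝ ℝ) : (ℝ × ℝ) ≃ₜ (ℝ × ℝ)) := by
  apply Isometry.of_dist_eq
  intro p q
  rw [Prod.dist_eq, Prod.dist_eq]
  exact max_comm _ _

/-- Transport of the edge statement along an isometric homeomorphism. -/
theorem aux_ST_transport (e : (ℝ × ℝ) ≃ₜ (ℝ × ℝ)) (hiso : Isometry e)
    (s : Set (ℝ × ℝ)) (p : ℝ × ℝ)
    (h : ∃ a₀ ∈ s, p ∈ closure (connectedComponentIn s a₀) ∧
      ∃ ρ > 0, ∀ q ∈ s, dist q p < ρ → q ∈ connectedComponentIn s a₀) :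
    ∃ a₀ ∈ e '' s, e p ∈ closure (connectedComponentIn (e '' s) a₀) ∧
      ∃ ρ > 0, ∀ q ∈ e '' s, dist q (e p) < ρ → q ∈ connectedComponentIn (e '' s) a₀ := by
  obtain ⟨a₀, ha₀, hcl, ρ, hρ, hmain⟩ := h
  refine ⟨e a₀, ⟨a₀, ha₀, rfl⟩, ?_, ρ, hρ, ?_⟩
  · rw [← aux_homeo_ccIn e s a₀, ← Homeomorph.image_closure]
    exact ⟨p, hcl, rfl⟩
  · rintro q ⟨q', hq', rfl⟩ hdist
    rw [← aux_homeo_ccIn e s a₀]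
    exact ⟨q', hmain q' hq' (by rwa [hiso.dist_eq] at hdist), rfl⟩

/-- At a level point, the nonvanishing gradient produces a short segment through `p`
on which `H` is above the level on one side and below on the other. -/
theorem aux_segment {F G f g : ℝ → ℝ} {H : ℝ × ℝ → ℝ}
    (hF : ∀ x, HasDerivAt F (f x) x) (hG : ∀ y, HasDerivAt G (g y) y)
    (hH : ∀ x y : ℝ, H (x, y) = F x + G y - x * y)
    (hgrad : ∀ x y : ℝ, (f x - y, g y - x) ≠ ((0:ℝ), (0:ℝ)))
    {p : ℝ × ℝ} {c : ℝ} (hpc : H p = c) :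
    ∃ v : ℝ × ℝ, v ≠ 0 ∧ ∃ ε > 0, ∀ t : ℝ, 0 < t → t < ε →
      (c < H (p + t • v) ∧ H (p - t • v) < c) := by
  set v : ℝ × ℝ := (f p.1 - p.2, g p.2 - p.1) with hv
  have hvne : v ≠ 0 := by
    intro h
    apply hgrad p.1 p.2
    rw [hv] at h
    rw [show ((0:ℝ), (0:ℝ)) = (0 : ℝ × ℝ) from rfl]
    exact h
  set ψ : ℝ → ℝ := fun t => F (p.1 + t * v.1) + G (p.2 + t * v.2) -
    (p.1 + t * v.1) * (p.2 + t * v.2) with hψ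
  have hψH : ∀ t : ℝ, ψ t = H (p + t • v) := by
    intro t
    have hpt : p + t • v = (p.1 + t * v.1, p.2 + t * v.2) := by
      rw [Prod.ext_iff]
      constructor
      · rw [Prod.fst_add, Prod.smul_fst, smul_eq_mul]
      · rw [Prod.snd_add, Prod.smul_snd, smul_eq_mul]
    rw [hpt, hH]
  have hψ0 : ψ 0 = c := by
    simp only [hψ, zero_mul, add_zero]
    rw [← hpc, ← hH p.1 p.2]
  set L : ℝ := v.1 ^ 2 + v.2 ^ 2 with hL
  have hLpos : 0 < L := by
    have hne : v.1 ≠ 0 ∨ v.2 ≠ 0 := by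
      by_contra hcon
      push_neg at hcon
      exact hvne (Prod.ext_iff.mpr ⟨hcon.1, hcon.2⟩)
    rcases hne with h | h
    · have := abs_pos.mpr h
      nlinarith [sq_abs v.1, sq_nonneg v.2]
    · have := abs_pos.mpr h
      nlinarith [sq_abs v.2, sq_nonneg v.1]
  have hd : HasDerivAt ψ L 0 := by
    have h1 : HasDerivAt (fun t : ℝ => p.1 + t * v.1) v.1 0 := by
      simpa using ((hasDerivAt_id (0:ℝ)).mul_const v.1).const_add p.1
    have h2 : HasDerivAt (fun t : ℝ => p.2 + t * v.2) v.2 0 := by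
      simpa using ((hasDerivAt_id (0:ℝ)).mul_const v.2).const_add p.2
    have hF1 : HasDerivAt (fun t : ℝ => F (p.1 + t * v.1)) (f (p.1 + 0 * v.1) * v.1) 0 :=
      (hF (p.1 + 0 * v.1)).comp 0 h1
    have hG1 : HasDerivAt (fun t : ℝ => G (p.2 + t * v.2)) (g (p.2 + 0 * v.2) * v.2) 0 :=
      (hG (p.2 + 0 * v.2)).comp 0 h2
    have hmul : HasDerivAt (fun t : ℝ => (p.1 + t * v.1) * (p.2 + t * v.2))
        (v.1 * (p.2 + 0 * v.2) + (p.1 + 0 * v.1) * v.2) 0 := h1.mul h2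
    have := (hF1.add hG1).sub hmul
    convert this using 1
    · rfl
    · rfl
    · rfl
    simp only [zero_mul, add_zero]
    have hv1 : v.1 = f p.1 - p.2 := rfl
    have hv2 : v.2 = g p.2 - p.1 := rfl
    rw [hL, hv1, hv2]
    ring
  have hslope := hasDerivAt_iff_tendsto_slope.mp hd
  have hev : ∀ᶠ t in nhdsWithin 0 {(0:ℝ)}ᶜ, 0 < slope ψ 0 t :=
    hslope.eventually (eventually_gt_nhds hLpos)
  rw [eventually_nhdsWithin_iff] at hev
  rw [Metric.eventually_nhds_iff] at hev
  obtain ⟨ε, hεpos, hε⟩ := hev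
  refine ⟨v, hvne, ε, hεpos, fun t ht htε => ?_⟩
  have hslope_t : 0 < slope ψ 0 t := by
    apply hε (y := t) _ (by simp [ne_of_gt ht])
    rw [Real.dist_eq, sub_zero, abs_of_pos ht]
    exact htε
  have hslope_nt : 0 < slope ψ 0 (-t) := by
    apply hε (y := -t) _ (by simp [ne_of_gt ht])
    rw [Real.dist_eq, sub_zero, abs_neg, abs_of_pos ht]
    exact htε
  rw [slope_def_field] at hslope_t hslope_nt
  constructor
  · have : 0 < (ψ t - ψ 0) / (t - 0) := hslope_t
    rw [sub_zero] at this
    have h2 : 0 < ψ t - ψ 0 := by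
      by_contra hc2
      push_neg at hc2
      nlinarith [div_nonpos_of_nonpos_of_nonneg hc2 (le_of_lt ht)]
    rw [hψ0] at h2
    rw [← hψH t]
    linarith
  · have : 0 < (ψ (-t) - ψ 0) / (-t - 0) := hslope_nt
    rw [sub_zero] at this
    have h2 : ψ (-t) - ψ 0 < 0 := by
      by_contra hc2
      push_neg at hc2
      have : (ψ (-t) - ψ 0) / (-t) ≤ 0 := div_nonpos_of_nonneg_of_nonpos hc2 (by linarith)
      linarith
    rw [hψ0] at h2
    have hrw : p - t • v = p + (-t) • v := by
      rw [neg_smul, ← sub_eq_add_neg]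
    rw [hrw, ← hψH (-t)]
    linarith

open Set




set_option maxHeartbeats 4000000 in
/-- There is a point `p` of the level set `{p ∈ Q : H p = c}` in the interior
of `Q` that lies in the closures of at least three distinct connected
components of `{p ∈ Q : H p ≠ c}`. -/
theorem branching_point_exists
    (F G f g : ℝ → ℝ)
    (hF : ∀ x, HasDerivAt F (f x) x) (hG : ∀ y, HasDerivAt G (g y) y)
    (hf : ∀ x, f x ∈ Set.Icc (0:ℝ) 1) (hg : ∀ y, g y ∈ Set.Icc (0:ℝ) 1)
    (H : ℝ × ℝ → ℝ) (hH : ∀ x y : ℝ, H (x, y) = F x + G y - x * y)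
    (hgrad : ∀ x y : ℝ, (f x - y, g y - x) ≠ ((0:ℝ), (0:ℝ)))
    (Q : Set (ℝ × ℝ)) (hQ : Q = Set.Icc (-1:ℝ) 2 ×ˢ Set.Icc (-1:ℝ) 2)
    (c : ℝ)
    (hc : c = sInf {d : ℝ | ((2:ℝ), (2:ℝ)) ∈
      connectedComponentIn {p : ℝ × ℝ | p ∈ Q ∧ H p ≤ d} (-1, -1)})
    (S : Set (ℝ × ℝ)) (hS : S = {p : ℝ × ℝ | p ∈ Q ∧ H p ≠ c}) :
    ∃ p : ℝ × ℝ, p ∈ Q ∧ H p = c ∧ p ∈ interior Q ∧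
      ∃ q₁ q₂ q₃ : ℝ × ℝ, q₁ ∈ S ∧ q₂ ∈ S ∧ q₃ ∈ S ∧
        connectedComponentIn S q₁ ≠ connectedComponentIn S q₂ ∧
        connectedComponentIn S q₁ ≠ connectedComponentIn S q₃ ∧
        connectedComponentIn S q₂ ≠ connectedComponentIn S q₃ ∧
        p ∈ closure (connectedComponentIn S q₁) ∧
        p ∈ closure (connectedComponentIn S q₂) ∧
        p ∈ closure (connectedComponentIn S q₃) := by
  classical
  by_contra hcon
  -- Basic objects
  set A : ℝ × ℝ := (-1, -1) with hA
  set B : ℝ × ℝ := ((2:ℝ), (2:ℝ)) with hB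
  set Dset : Set ℝ := {d : ℝ | ((2:ℝ), (2:ℝ)) ∈
      connectedComponentIn {p : ℝ × ℝ | p ∈ Q ∧ H p ≤ d} (-1, -1)} with hDdef
  set low : Set (ℝ × ℝ) := {p : ℝ × ℝ | p ∈ Q ∧ H p < c} with hlowdef
  set high : Set (ℝ × ℝ) := {p : ℝ × ℝ | p ∈ Q ∧ c < H p} with hhighdef
  have hQcomp : IsCompact Q := by rw [hQ]; exact isCompact_Icc.prod isCompact_Icc
  have hQconv : Convex ℝ Q := by rw [hQ]; exact (convex_Icc _ _).prod (convex_Icc _ _)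
  have hQclosed : IsClosed Q := hQcomp.isClosed
  have hQconn : IsPreconnected Q := hQconv.isPreconnected
  have Hcont : Continuous H := aux_Hcont hF hG hH
  have hFmono : Monotone F := monotone_of_hasDerivAt_nonneg hF (fun x => (hf x).1)
  have hGmono : Monotone G := monotone_of_hasDerivAt_nonneg hG (fun y => (hg y).1)
  have hFlip : ∀ a b : ℝ, a ≤ b → F b - F a ≤ b - a := by
    have hm : Monotone (fun x : ℝ => x - F x) :=
      monotone_of_hasDerivAt_nonneg (f' := fun x : ℝ => 1 - f x)
        (fun x => (hasDerivAt_id x).sub (hF x))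
        (fun x => by have := (hf x).2; simp only [Pi.zero_apply]; linarith)
    intro a b hab
    have := hm hab
    simp only at this
    linarith
  have hGlip : ∀ a b : ℝ, a ≤ b → G b - G a ≤ b - a := by
    have hm : Monotone (fun y : ℝ => y - G y) :=
      monotone_of_hasDerivAt_nonneg (f' := fun y : ℝ => 1 - g y)
        (fun y => (hasDerivAt_id y).sub (hG y))
        (fun y => by have := (hg y).2; simp only [Pi.zero_apply]; linarith)
    intro a b hab
    have := hm hab
    simp only at this
    linarith
  have hAQ : A ∈ Q := by
    rw [hA, hQ]
    exact ⟨⟨by norm_num, by norm_num⟩, ⟨by norm_num, by norm_num⟩⟩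
  have hBQ : B ∈ Q := by
    rw [hB, hQ]
    exact ⟨⟨by norm_num, by norm_num⟩, ⟨by norm_num, by norm_num⟩⟩
  -- `Dset` is nonempty, upward closed, bounded below with quantitative bounds
  have hDup : ∀ d ∈ Dset, ∀ d' : ℝ, d ≤ d' → d' ∈ Dset := by
    intro d hd d' hdd'
    show ((2:ℝ), (2:ℝ)) ∈ connectedComponentIn {p : ℝ × ℝ | p ∈ Q ∧ H p ≤ d'} (-1, -1)
    have hsub : {p : ℝ × ℝ | p ∈ Q ∧ H p ≤ d} ⊆ {p : ℝ × ℝ | p ∈ Q ∧ H p ≤ d'} :=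
      fun p hp => ⟨hp.1, le_trans hp.2 hdd'⟩
    exact connectedComponentIn_mono _ hsub hd
  have hDne : Dset.Nonempty := by
    obtain ⟨m, hmQ, hmax⟩ := hQcomp.exists_isMaxOn ⟨A, hAQ⟩ Hcont.continuousOn
    refine ⟨H m, ?_⟩
    have hset : {p : ℝ × ℝ | p ∈ Q ∧ H p ≤ H m} = Q := by
      ext p
      exact ⟨fun h => h.1, fun h => ⟨h, isMaxOn_iff.mp hmax p h⟩⟩
    show B ∈ connectedComponentIn {p : ℝ × ℝ | p ∈ Q ∧ H p ≤ H m} A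
    rw [hset, hQconn.connectedComponentIn hAQ]
    exact hBQ
  have hDlbA : ∀ d ∈ Dset, H A + 1 ≤ d := by
    intro d hd
    have hd' : B ∈ connectedComponentIn {p : ℝ × ℝ | p ∈ Q ∧ H p ≤ d} A := hd
    set T := connectedComponentIn {p : ℝ × ℝ | p ∈ Q ∧ H p ≤ d} A with hT
    have hAmem : A ∈ {p : ℝ × ℝ | p ∈ Q ∧ H p ≤ d} :=
      connectedComponentIn_nonempty_iff.mp ⟨B, hd'⟩
    have hAT : A ∈ T := mem_connectedComponentIn hAmem
    have hTp : IsPreconnected T := isPreconnected_connectedComponentIn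
    have hTsub : T ⊆ {p : ℝ × ℝ | p ∈ Q ∧ H p ≤ d} := connectedComponentIn_subset _ _
    have hψc : ContinuousOn (fun p : ℝ × ℝ => max p.1 p.2) T :=
      (continuous_fst.max continuous_snd).continuousOn
    have hIV := hTp.intermediate_value hAT hd' hψc
    have h0 : (0:ℝ) ∈ Icc (max A.1 A.2) (max B.1 B.2) := by
      rw [hA, hB]; norm_num
    obtain ⟨q, hqT, hq0'⟩ := hIV h0
    have hq0 : max q.1 q.2 = 0 := hq0'
    obtain ⟨hqQ, hqd⟩ := hTsub hqT
    have hqQ' : q ∈ Icc (-1:ℝ) 2 ×ˢ Icc (-1:ℝ) 2 := by rw [← hQ]; exact hqQ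
    have hq1a : (-1:ℝ) ≤ q.1 := hqQ'.1.1
    have hq2a : (-1:ℝ) ≤ q.2 := hqQ'.2.1
    have hprod : q.1 * q.2 = 0 := by
      rcases le_total q.1 q.2 with h | h
      · have h2 : q.2 = 0 := by rwa [max_eq_right h] at hq0
        rw [h2, mul_zero]
      · have h1 : q.1 = 0 := by rwa [max_eq_left h] at hq0
        rw [h1, zero_mul]
    have hHq : H q = F q.1 + G q.2 - q.1 * q.2 := hH q.1 q.2
    have hHA' : H A = F (-1) + G (-1) - (-1) * (-1) := by rw [hA]; exact hH (-1) (-1)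
    have hF1 : F (-1) ≤ F q.1 := hFmono hq1a
    have hG1 : G (-1) ≤ G q.2 := hGmono hq2a
    rw [hHA']
    rw [hHq, hprod] at hqd
    nlinarith
  have hDlbB : ∀ d ∈ Dset, H B + 1 ≤ d := by
    intro d hd
    have hd' : B ∈ connectedComponentIn {p : ℝ × ℝ | p ∈ Q ∧ H p ≤ d} A := hd
    set T := connectedComponentIn {p : ℝ × ℝ | p ∈ Q ∧ H p ≤ d} A with hT
    have hAmem : A ∈ {p : ℝ × ℝ | p ∈ Q ∧ H p ≤ d} :=
      connectedComponentIn_nonempty_iff.mp ⟨B, hd'⟩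
    have hAT : A ∈ T := mem_connectedComponentIn hAmem
    have hTp : IsPreconnected T := isPreconnected_connectedComponentIn
    have hTsub : T ⊆ {p : ℝ × ℝ | p ∈ Q ∧ H p ≤ d} := connectedComponentIn_subset _ _
    have hψc : ContinuousOn (fun p : ℝ × ℝ => min p.1 p.2) T :=
      (continuous_fst.min continuous_snd).continuousOn
    have hIV := hTp.intermediate_value hAT hd' hψc
    have h1 : (1:ℝ) ∈ Icc (min A.1 A.2) (min B.1 B.2) := by
      rw [hA, hB]; norm_num
    obtain ⟨q, hqT, hq1'⟩ := hIV h1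
    have hq1 : min q.1 q.2 = 1 := hq1'
    obtain ⟨hqQ, hqd⟩ := hTsub hqT
    have hqQ' : q ∈ Icc (-1:ℝ) 2 ×ˢ Icc (-1:ℝ) 2 := by rw [← hQ]; exact hqQ
    have hq1b : q.1 ≤ 2 := hqQ'.1.2
    have hq2b : q.2 ≤ 2 := hqQ'.2.2
    have hq1ge : (1:ℝ) ≤ q.1 := hq1 ▸ min_le_left q.1 q.2
    have hq2ge : (1:ℝ) ≤ q.2 := hq1 ▸ min_le_right q.1 q.2
    have hHq : H q = F q.1 + G q.2 - q.1 * q.2 := hH q.1 q.2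
    have hHB' : H B = F 2 + G 2 - 2 * 2 := by rw [hB]; exact hH 2 2
    have hF1 : F 2 - F q.1 ≤ 2 - q.1 := hFlip q.1 2 hq1b
    have hG1 : G 2 - G q.2 ≤ 2 - q.2 := hGlip q.2 2 hq2b
    rw [hHB']
    rw [hHq] at hqd
    rcases le_total q.1 q.2 with h | h
    · have h1' : q.1 = 1 := by rwa [min_eq_left h] at hq1
      have hpr : q.1 * q.2 = q.2 := by rw [h1', one_mul]
      rw [hpr] at hqd
      linarith
    · have h2' : q.2 = 1 := by rwa [min_eq_right h] at hq1
      have hpr : q.1 * q.2 = q.1 := by rw [h2', mul_one]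
      rw [hpr] at hqd
      linarith
  have hDbdd : BddBelow Dset := ⟨H A + 1, fun d hd => hDlbA d hd⟩
  have hcD : ∀ d : ℝ, c < d → d ∈ Dset := by
    intro d hcd
    rw [hc] at hcd
    obtain ⟨d₀, hd₀, hd₀d⟩ := (csInf_lt_iff hDbdd hDne).mp hcd
    exact hDup d₀ hd₀ d (le_of_lt hd₀d)
  have hcA : H A + 1 ≤ c := by rw [hc]; exact le_csInf hDne hDlbA
  have hcB : H B + 1 ≤ c := by rw [hc]; exact le_csInf hDne hDlbB
  -- the pass level is below the diagonal maximum, which is well below the peak corners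
  have hdiagbound : ∃ d₀ ∈ Dset, ∃ t : ℝ, -1 ≤ t ∧ t ≤ 2 ∧ d₀ = F t + G t - t * t := by
    set diag := (fun t : ℝ => ((t:ℝ), t)) '' Icc (-1:ℝ) 2 with hdiag
    have hdcomp : IsCompact diag := isCompact_Icc.image (by fun_prop)
    have hdconn : IsPreconnected diag := isPreconnected_Icc.image _ (by fun_prop)
    have hdQ : diag ⊆ Q := by
      rintro z ⟨t, ht, rfl⟩
      rw [hQ]
      exact ⟨⟨ht.1, ht.2⟩, ⟨ht.1, ht.2⟩⟩
    have hAdiag : A ∈ diag := ⟨-1, by norm_num, hA.symm⟩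
    have hBdiag : B ∈ diag := ⟨2, by norm_num, hB.symm⟩
    obtain ⟨m, hmdiag, hmax⟩ := hdcomp.exists_isMaxOn ⟨A, hAdiag⟩ Hcont.continuousOn
    have hdsub : diag ⊆ {p : ℝ × ℝ | p ∈ Q ∧ H p ≤ H m} :=
      fun p hp => ⟨hdQ hp, isMaxOn_iff.mp hmax p hp⟩
    have hmD : H m ∈ Dset := hdconn.subset_connectedComponentIn hAdiag hdsub hBdiag
    obtain ⟨t, ht, hmt⟩ := hmdiag
    refine ⟨H m, hmD, t, ht.1, ht.2, ?_⟩
    rw [← hmt]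
    exact hH t t
  have hcP1 : c ≤ H ((2:ℝ), (-1:ℝ)) - 3/4 := by
    obtain ⟨d₀, hd₀, t, ht1, ht2, hdt⟩ := hdiagbound
    have hcd : c ≤ d₀ := by rw [hc]; exact csInf_le hDbdd hd₀
    have hP1 : H ((2:ℝ), (-1:ℝ)) = F 2 + G (-1) - 2 * (-1) := hH 2 (-1)
    have h1 : F t ≤ F 2 := hFmono ht2
    have h2 : G t - G (-1) ≤ t - (-1) := hGlip (-1) t ht1
    nlinarith [sq_nonneg (t - 1/2)]
  have hcP2 : c ≤ H ((-1:ℝ), (2:ℝ)) - 3/4 := by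
    obtain ⟨d₀, hd₀, t, ht1, ht2, hdt⟩ := hdiagbound
    have hcd : c ≤ d₀ := by rw [hc]; exact csInf_le hDbdd hd₀
    have hP2 : H ((-1:ℝ), (2:ℝ)) = F (-1) + G 2 - (-1) * 2 := hH (-1) 2
    have h1 : G t ≤ G 2 := hGmono ht2
    have h2 : F t - F (-1) ≤ t - (-1) := hFlip (-1) t ht1
    nlinarith [sq_nonneg (t - 1/2)]
  have hHA : H A < c := by linarith
  have hHB : H B < c := by linarith
  have hAlow : A ∈ low := ⟨hAQ, hHA⟩
  have hBlow : B ∈ low := ⟨hBQ, hHB⟩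
  have hlowQ : low ⊆ Q := fun p hp => hp.1
  have hhighQ : high ⊆ Q := fun p hp => hp.1
  have hlowopen : ∀ q ∈ low, ∃ ε > 0, Metric.closedBall q ε ∩ Q ⊆ low := by
    intro q hq
    have : IsOpen {p : ℝ × ℝ | H p < c} := isOpen_lt Hcont continuous_const
    obtain ⟨ε, hε, hball⟩ := Metric.isOpen_iff.mp this q hq.2
    refine ⟨ε/2, by linarith, fun z hz => ⟨hz.2, hball ?_⟩⟩
    calc dist z q ≤ ε/2 := hz.1
    _ < ε := by linarith
  have hhighopen : ∀ q ∈ high, ∃ ε > 0, Metric.closedBall q ε ∩ Q ⊆ high := by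
    intro q hq
    have : IsOpen {p : ℝ × ℝ | c < H p} := isOpen_lt continuous_const Hcont
    obtain ⟨ε, hε, hball⟩ := Metric.isOpen_iff.mp this q hq.2
    refine ⟨ε/2, by linarith, fun z hz => ⟨hz.2, hball ?_⟩⟩
    calc dist z q ≤ ε/2 := hz.1
    _ < ε := by linarith
  -- the two components of the corners in the strict sublevel set are distinct
  have hUVne : connectedComponentIn low A ≠ connectedComponentIn low B := by
    intro heq
    have hBA : B ∈ connectedComponentIn low A := by
      rw [heq]; exact mem_connectedComponentIn hBlow
    obtain ⟨Z, hZcomp, hZconn, hZlow, hAZ, hBZ⟩ :=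
      aux_chain hQconv hQclosed hlowQ hlowopen hBA
    obtain ⟨m, hmZ, hmax⟩ := hZcomp.exists_isMaxOn ⟨A, hAZ⟩ Hcont.continuousOn
    have hmc : H m < c := (hZlow hmZ).2
    have hZsub : Z ⊆ {p : ℝ × ℝ | p ∈ Q ∧ H p ≤ H m} :=
      fun p hp => ⟨(hZlow hp).1, isMaxOn_iff.mp hmax p hp⟩
    have : H m ∈ Dset := hZconn.subset_connectedComponentIn hAZ hZsub hBZ
    have : c ≤ H m := by rw [hc]; exact csInf_le hDbdd this
    linarith
  -- components of `S` through points of `low`/`high` agree with components there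
  have hScompl : ∀ q ∈ low, connectedComponentIn S q = connectedComponentIn low q := by
    intro q hq
    have hqS : q ∈ S := by rw [hS]; exact ⟨hq.1, ne_of_lt hq.2⟩
    apply Subset.antisymm
    · have hTlow : connectedComponentIn S q ⊆ low := by
        intro z hz
        have hzS : z ∈ S := connectedComponentIn_subset _ _ hz
        rw [hS] at hzS
        rcases lt_or_gt_of_ne hzS.2 with h | h
        · exact ⟨hzS.1, h⟩
        · exfalso
          have hIV := (isPreconnected_connectedComponentIn (F := S) (x := q)).intermediate_value
            (mem_connectedComponentIn hqS) hz Hcont.continuousOn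
          obtain ⟨w, hwT, hwc⟩ := hIV ⟨le_of_lt hq.2, le_of_lt h⟩
          have : w ∈ S := connectedComponentIn_subset _ _ hwT
          rw [hS] at this
          exact this.2 hwc
      exact (isPreconnected_connectedComponentIn).subset_connectedComponentIn
        (mem_connectedComponentIn hqS) hTlow
    · apply connectedComponentIn_mono
      rw [hS]
      exact fun z hz => ⟨hz.1, ne_of_lt hz.2⟩
  have hScomph : ∀ q ∈ high, connectedComponentIn S q = connectedComponentIn high q := by
    intro q hq
    have hqS : q ∈ S := by rw [hS]; exact ⟨hq.1, ne_of_gt hq.2⟩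
    apply Subset.antisymm
    · have hThigh : connectedComponentIn S q ⊆ high := by
        intro z hz
        have hzS : z ∈ S := connectedComponentIn_subset _ _ hz
        rw [hS] at hzS
        rcases lt_or_gt_of_ne hzS.2 with h | h
        · exfalso
          have hIV := (isPreconnected_connectedComponentIn (F := S) (x := q)).intermediate_value
            hz (mem_connectedComponentIn hqS) Hcont.continuousOn
          obtain ⟨w, hwT, hwc⟩ := hIV ⟨le_of_lt h, le_of_lt hq.2⟩
          have : w ∈ S := connectedComponentIn_subset _ _ hwT
          rw [hS] at this
          exact this.2 hwc
        · exact ⟨hzS.1, h⟩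
      exact (isPreconnected_connectedComponentIn).subset_connectedComponentIn
        (mem_connectedComponentIn hqS) hThigh
    · apply connectedComponentIn_mono
      rw [hS]
      exact fun z hz => ⟨hz.1, ne_of_gt hz.2⟩
  -- the nested continua joining the two corners
  have hlevcomp : ∀ n : ℕ, IsCompact {p : ℝ × ℝ | p ∈ Q ∧ H p ≤ c + 1/(n+1)} := by
    intro n
    apply hQcomp.of_isClosed_subset
    · exact hQclosed.inter (isClosed_le Hcont continuous_const)
    · exact fun p hp => hp.1
  set Kn : ℕ → Set (ℝ × ℝ) := fun n =>
    connectedComponentIn {p : ℝ × ℝ | p ∈ Q ∧ H p ≤ c + 1/(n+1)} A with hKndef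
  have hKncomp : ∀ n, IsCompact (Kn n) :=
    fun n => aux_isCompact_connectedComponentIn (hlevcomp n) A
  have hKnconn : ∀ n, IsPreconnected (Kn n) := fun n => isPreconnected_connectedComponentIn
  have hKnanti : ∀ n, Kn (n+1) ⊆ Kn n := by
    intro n
    apply connectedComponentIn_mono
    intro p hp
    refine ⟨hp.1, le_trans hp.2 ?_⟩
    have h1 : (0:ℝ) < (n:ℝ) + 1 := by positivity
    have h2 : (n:ℝ) + 1 ≤ (n:ℝ) + 1 + 1 := by linarith
    have := one_div_le_one_div_of_le h1 h2
    push_cast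
    linarith
  have hAKn : ∀ n, A ∈ Kn n := by
    intro n
    apply mem_connectedComponentIn
    refine ⟨hAQ, ?_⟩
    have : (0:ℝ) < 1/((n:ℝ)+1) := by positivity
    linarith
  have hBKn : ∀ n, B ∈ Kn n := by
    intro n
    have hpos : (0:ℝ) < 1/((n:ℝ)+1) := by positivity
    have hmem : (c + 1/((n:ℝ)+1)) ∈ Dset := hcD _ (by linarith)
    rw [hB]
    exact hmem
  set K : Set (ℝ × ℝ) := ⋂ n, Kn n with hKdef
  have hKcomp : IsCompact K :=
    (hKncomp 0).of_isClosed_subset (isClosed_iInter fun n => (hKncomp n).isClosed)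
      (iInter_subset _ 0)
  have hKconn : IsPreconnected K := aux_isPreconnected_iInter hKncomp hKnconn hKnanti
  have hAK : A ∈ K := mem_iInter.mpr hAKn
  have hBK : B ∈ K := mem_iInter.mpr hBKn
  have hKQ : K ⊆ Q := fun p hp => (connectedComponentIn_subset _ _ ((mem_iInter.mp hp) 0)).1
  have hKlev : ∀ p ∈ K, H p ≤ c := by
    intro p hp
    by_contra hgt
    push_neg at hgt
    obtain ⟨n, hn⟩ := exists_nat_one_div_lt (show (0:ℝ) < H p - c by linarith)
    have := (connectedComponentIn_subset _ _ ((mem_iInter.mp hp) n)).2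
    linarith
  -- a point is in the closure of the little segments it emits
  have hsegcl : ∀ (p v : ℝ × ℝ) (t0 : ℝ), 0 < t0 →
      p ∈ closure ((fun t : ℝ => p + t • v) '' Ioo 0 t0) := by
    intro p v t0 ht0
    rw [Metric.mem_closure_iff]
    intro r hr
    have hnv : (0:ℝ) < ‖v‖ + 1 := by positivity
    set t := min (t0/2) (r/(‖v‖+1)) with htdef
    have htpos : 0 < t := lt_min (by linarith) (by positivity)
    refine ⟨p + t • v, ⟨t, ⟨htpos, ?_⟩, rfl⟩, ?_⟩
    · calc t ≤ t0/2 := min_le_left _ _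
      _ < t0 := by linarith
    · rw [dist_eq_norm]
      have he : p - (p + t • v) = -(t • v) := by abel
      rw [he, norm_neg, norm_smul, Real.norm_eq_abs, abs_of_pos htpos]
      have h1 : t ≤ r/(‖v‖+1) := min_le_right _ _
      have h2 : t * ‖v‖ ≤ (r/(‖v‖+1)) * ‖v‖ := mul_le_mul_of_nonneg_right h1 (norm_nonneg v)
      have h3 : (r/(‖v‖+1)) * ‖v‖ < r := by
        rw [div_mul_eq_mul_div, div_lt_iff₀ hnv]
        nlinarith [norm_nonneg v]
      linarith
  have hQint : interior Q = Ioo (-1:ℝ) 2 ×ˢ Ioo (-1:ℝ) 2 := by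
    rw [hQ, interior_prod_eq, interior_Icc]
  -- interior level points adjacent to two distinct components of `low` give branching
  have keyint : ∀ p : ℝ × ℝ, p ∈ interior Q → H p = c →
      ∀ C C' : Set (ℝ × ℝ), (∃ qc ∈ low, C = connectedComponentIn low qc) →
      (∃ qc' ∈ low, C' = connectedComponentIn low qc') →
      p ∈ closure C → p ∈ closure C' → C = C' := by
    rintro p hpint hpc C C' ⟨qc, hqc, rfl⟩ ⟨qc', hqc', rfl⟩ hpC hpC'
    by_contra hne
    obtain ⟨v, hvne, ε, hεpos, hseg⟩ := aux_segment hF hG hH hgrad hpc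
    obtain ⟨ρ₀, hρ₀, hball⟩ := Metric.isOpen_iff.mp isOpen_interior p hpint
    have hnv : (0:ℝ) < ‖v‖ + 1 := by positivity
    set t0 := min (ε/2) (ρ₀/(‖v‖+1)) with ht0def
    have ht0pos : 0 < t0 := lt_min (by linarith) (by positivity)
    have hsegQ : ∀ t : ℝ, 0 < t → t < t0 → p + t • v ∈ interior Q := by
      intro t ht htt
      apply hball
      rw [Metric.mem_ball, dist_eq_norm]
      have he : p + t • v - p = t • v := by abel
      rw [he, norm_smul, Real.norm_eq_abs, abs_of_pos ht]
      have h1 : t < ρ₀/(‖v‖+1) := lt_of_lt_of_le htt (min_le_right _ _)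
      have h2 : t * ‖v‖ < (ρ₀/(‖v‖+1)) * (‖v‖+1) := by nlinarith [norm_nonneg v]
      rwa [div_mul_cancel₀ _ (ne_of_gt hnv)] at h2
    set segp := (fun t : ℝ => p + t • v) '' Ioo 0 t0 with hsegp
    have hsub : segp ⊆ high := by
      rintro z ⟨t, ⟨ht1, ht2⟩, rfl⟩
      have htε : t < ε := by
        have h := lt_of_lt_of_le ht2 (min_le_left _ _)
        linarith
      exact ⟨interior_subset (hsegQ t ht1 ht2), (hseg t ht1 htε).1⟩
    set w := p + (t0/2) • v with hwdef
    have hwmem : w ∈ segp := ⟨t0/2, ⟨by linarith, by linarith⟩, rfl⟩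
    have hwhigh : w ∈ high := hsub hwmem
    have hconn : IsPreconnected segp :=
      isPreconnected_Ioo.image _ (Continuous.continuousOn (by fun_prop))
    have hsegC : segp ⊆ connectedComponentIn high w :=
      hconn.subset_connectedComponentIn hwmem hsub
    apply hcon
    refine ⟨p, interior_subset hpint, hpc, hpint, qc, qc', w, ?_, ?_, ?_, ?_, ?_, ?_, ?_, ?_, ?_⟩
    · rw [hS]; exact ⟨hqc.1, ne_of_lt hqc.2⟩
    · rw [hS]; exact ⟨hqc'.1, ne_of_lt hqc'.2⟩
    · rw [hS]; exact ⟨hwhigh.1, ne_of_gt hwhigh.2⟩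
    · rw [hScompl qc hqc, hScompl qc' hqc']; exact hne
    · rw [hScompl qc hqc, hScomph w hwhigh]
      intro heq
      have h1 : qc ∈ connectedComponentIn low qc := mem_connectedComponentIn hqc
      rw [heq] at h1
      have h2 : qc ∈ high := connectedComponentIn_subset _ _ h1
      have := hqc.2
      have := h2.2
      linarith
    · rw [hScompl qc' hqc', hScomph w hwhigh]
      intro heq
      have h1 : qc' ∈ connectedComponentIn low qc' := mem_connectedComponentIn hqc'
      rw [heq] at h1
      have h2 : qc' ∈ high := connectedComponentIn_subset _ _ h1
      have := hqc'.2
      have := h2.2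
      linarith
    · rw [hScompl qc hqc]; exact hpC
    · rw [hScompl qc' hqc']; exact hpC'
    · rw [hScomph w hwhigh]
      exact closure_mono hsegC (hsegcl p v t0 ht0pos)
  -- interior level points are in the closure of some component of `low`
  have hlowseg : ∀ p : ℝ × ℝ, p ∈ interior Q → H p = c →
      ∃ qd ∈ low, p ∈ closure (connectedComponentIn low qd) := by
    intro p hpint hpeq
    obtain ⟨v, hvne, ε, hεpos, hseg⟩ := aux_segment hF hG hH hgrad hpeq
    obtain ⟨ρ₀, hρ₀, hball⟩ := Metric.isOpen_iff.mp isOpen_interior p hpint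
    have hnv : (0:ℝ) < ‖v‖ + 1 := by positivity
    set t0 := min (ε/2) (ρ₀/(‖v‖+1)) with ht0def
    have ht0pos : 0 < t0 := lt_min (by linarith) (by positivity)
    have hsegQ : ∀ t : ℝ, 0 < t → t < t0 → p + t • (-v) ∈ interior Q := by
      intro t ht htt
      apply hball
      rw [Metric.mem_ball, dist_eq_norm]
      have he : p + t • (-v) - p = t • (-v) := by abel
      rw [he, norm_smul, Real.norm_eq_abs, abs_of_pos ht, norm_neg]
      have h1 : t < ρ₀/(‖v‖+1) := lt_of_lt_of_le htt (min_le_right _ _)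
      have h2 : t * ‖v‖ < (ρ₀/(‖v‖+1)) * (‖v‖+1) := by nlinarith [norm_nonneg v]
      rwa [div_mul_cancel₀ _ (ne_of_gt hnv)] at h2
    set segm := (fun t : ℝ => p + t • (-v)) '' Ioo 0 t0 with hsegm
    have hsub : segm ⊆ low := by
      rintro z ⟨t, ⟨ht1, ht2⟩, rfl⟩
      have htε : t < ε := by
        have h := lt_of_lt_of_le ht2 (min_le_left _ _)
        linarith
      have hlow' := (hseg t ht1 htε).2
      have heq2 : p + t • (-v) = p - t • v := by rw [smul_neg]; abel
      refine ⟨interior_subset (hsegQ t ht1 ht2), ?_⟩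
      show H (p + t • (-v)) < c
      rwa [heq2]
    set w := p + (t0/2) • (-v) with hwdef
    have hwmem : w ∈ segm := ⟨t0/2, ⟨by linarith, by linarith⟩, rfl⟩
    have hwlow : w ∈ segm := hwmem
    have hconn : IsPreconnected segm :=
      isPreconnected_Ioo.image _ (Continuous.continuousOn (by fun_prop))
    have hsegC : segm ⊆ connectedComponentIn low w :=
      hconn.subset_connectedComponentIn hwmem hsub
    exact ⟨w, hsub hwmem, closure_mono hsegC (hsegcl p (-v) t0 ht0pos)⟩
  -- the boundary adjacency statement
  have hP1c : c < H ((2:ℝ), (-1:ℝ)) := by linarith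
  have hP2c : c < H ((-1:ℝ), (2:ℝ)) := by linarith
  have hlowset : {q : ℝ × ℝ | q ∈ Icc (-1:ℝ) 2 ×ˢ Icc (-1:ℝ) 2 ∧ H q < c} = low := by
    rw [hlowdef, hQ]
  have bdry : ∀ p : ℝ × ℝ, p ∈ Q → H p = c → p ∉ interior Q →
      ∃ a₀ ∈ low, p ∈ closure (connectedComponentIn low a₀) ∧
        ∃ ρ > 0, ∀ q ∈ low, dist q p < ρ → q ∈ connectedComponentIn low a₀ := by
    intro p hpQ hpc hpni
    have hpQ' : p ∈ Icc (-1:ℝ) 2 ×ˢ Icc (-1:ℝ) 2 := by rw [← hQ]; exact hpQ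
    obtain ⟨⟨hp11, hp12⟩, hp21, hp22⟩ := hpQ'
    rw [hQint] at hpni
    have hedge : p.1 = -1 ∨ p.1 = 2 ∨ p.2 = -1 ∨ p.2 = 2 := by
      by_contra hcon2
      push_neg at hcon2
      obtain ⟨h1, h2, h3, h4⟩ := hcon2
      exact hpni ⟨⟨lt_of_le_of_ne hp11 (Ne.symm h1), lt_of_le_of_ne hp12 h2⟩,
        ⟨lt_of_le_of_ne hp21 (Ne.symm h3), lt_of_le_of_ne hp22 h4⟩⟩
    have hnotA : ¬(p.1 = -1 ∧ p.2 = -1) := by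
      rintro ⟨h1, h2⟩
      have : p = A := by rw [hA]; exact Prod.ext_iff.mpr ⟨h1, h2⟩
      rw [this] at hpc
      linarith
    have hnotB : ¬(p.1 = 2 ∧ p.2 = 2) := by
      rintro ⟨h1, h2⟩
      have : p = B := by rw [hB]; exact Prod.ext_iff.mpr ⟨h1, h2⟩
      rw [this] at hpc
      linarith
    have hnotP1 : ¬(p.1 = 2 ∧ p.2 = -1) := by
      rintro ⟨h1, h2⟩
      have : p = ((2:ℝ), (-1:ℝ)) := Prod.ext_iff.mpr ⟨h1, h2⟩
      rw [this] at hpc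
      linarith
    have hnotP2 : ¬(p.1 = -1 ∧ p.2 = 2) := by
      rintro ⟨h1, h2⟩
      have : p = ((-1:ℝ), (2:ℝ)) := Prod.ext_iff.mpr ⟨h1, h2⟩
      rw [this] at hpc
      linarith
    rcases hedge with h | h | h | h
    · -- left edge : x = -1
      have hy1 : p.2 ≠ -1 := fun h2 => hnotA ⟨h, h2⟩
      have hy2 : p.2 ≠ 2 := fun h2 => hnotP2 ⟨h, h2⟩
      have hx₀ : p.2 ∈ Ioo (-1:ℝ) 2 :=
        ⟨lt_of_le_of_ne hp21 (Ne.symm hy1), lt_of_le_of_ne hp22 hy2⟩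
      set J : ℝ × ℝ → ℝ := fun q => H (q.2, q.1) with hJdef
      have hJc : Continuous J := Hcont.comp (continuous_snd.prodMk continuous_fst)
      have hmono : ∀ y a b : ℝ, -1 ≤ y → y ≤ -(1:ℝ)/2 → a < b → J (a, y) < J (b, y) :=
        fun y a b _ hy hab => aux_mono3 hG hg hH hy hab
      have hcJ : J (p.2, -1) = c := by
        show H (-1, p.2) = c
        have : ((-1:ℝ), p.2) = p := Prod.ext_iff.mpr ⟨h.symm, rfl⟩
        rw [this]
        exact hpc
      have hST := aux_ST_transport (Homeomorph.prodComm ℝ ℝ) auxSwap_isometry _ _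
        (aux_edge J hJc c hmono hx₀ hcJ)
      have himg : (Homeomorph.prodComm ℝ ℝ) ''
          {q : ℝ × ℝ | q ∈ Icc (-1:ℝ) 2 ×ˢ Icc (-1:ℝ) 2 ∧ J q < c} = low := by
        ext z
        constructor
        · rintro ⟨x, ⟨hxQ, hxJ⟩, rfl⟩
          refine ⟨?_, hxJ⟩
          rw [hQ]
          exact ⟨hxQ.2, hxQ.1⟩
        · rintro ⟨hzQ, hzH⟩
          rw [hQ] at hzQ
          exact ⟨(z.2, z.1), ⟨⟨hzQ.2, hzQ.1⟩, hzH⟩, rfl⟩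
      have hep : (Homeomorph.prodComm ℝ ℝ) ((p.2 : ℝ), (-1:ℝ)) = p :=
        Prod.ext_iff.mpr ⟨h.symm, rfl⟩
      rw [himg, hep] at hST
      exact hST
    · -- right edge : x = 2
      have hy1 : p.2 ≠ -1 := fun h2 => hnotP1 ⟨h, h2⟩
      have hy2 : p.2 ≠ 2 := fun h2 => hnotB ⟨h, h2⟩
      have hx₀ : 1 - p.2 ∈ Ioo (-1:ℝ) 2 := by
        constructor
        · have := lt_of_le_of_ne hp22 hy2; linarith
        · have := lt_of_le_of_ne hp21 (Ne.symm hy1); linarith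
      set J : ℝ × ℝ → ℝ := fun q => H (1 - q.2, 1 - q.1) with hJdef
      have hJc : Continuous J := Hcont.comp (by fun_prop)
      have hmono : ∀ y a b : ℝ, -1 ≤ y → y ≤ -(1:ℝ)/2 → a < b → J (a, y) < J (b, y) := by
        intro y a b _ hy hab
        show H (1 - y, 1 - a) < H (1 - y, 1 - b)
        exact aux_mono4 hG hg hH (by linarith) (by linarith)
      have hcJ : J (1 - p.2, -1) = c := by
        show H (1 - (-1), 1 - (1 - p.2)) = c
        have : ((1:ℝ) - (-1), 1 - (1 - p.2)) = p := Prod.ext_iff.mpr ⟨by rw [h]; ring, by ring⟩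
        rw [this]
        exact hpc
      set e := auxRefl.trans (Homeomorph.prodComm ℝ ℝ) with hedef
      have heiso : Isometry e := auxSwap_isometry.comp auxRefl_isometry
      have hST := aux_ST_transport e heiso _ _ (aux_edge J hJc c hmono hx₀ hcJ)
      have heapp : ∀ x : ℝ × ℝ, e x = (1 - x.2, 1 - x.1) := fun x => rfl
      have himg : e '' {q : ℝ × ℝ | q ∈ Icc (-1:ℝ) 2 ×ˢ Icc (-1:ℝ) 2 ∧ J q < c} = low := by
        ext z
        constructor
        · rintro ⟨x, ⟨hxQ, hxJ⟩, rfl⟩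
          have hb1 := hxQ.1.1
          have hb2 := hxQ.1.2
          have hb3 := hxQ.2.1
          have hb4 := hxQ.2.2
          rw [heapp x]
          refine ⟨?_, hxJ⟩
          rw [hQ]
          refine ⟨⟨?_, ?_⟩, ?_, ?_⟩
          · show (-1:ℝ) ≤ 1 - x.2
            linarith
          · show (1:ℝ) - x.2 ≤ 2
            linarith
          · show (-1:ℝ) ≤ 1 - x.1
            linarith
          · show (1:ℝ) - x.1 ≤ 2
            linarith
        · rintro ⟨hzQ, hzH⟩
          rw [hQ] at hzQ
          have hb1 := hzQ.1.1
          have hb2 := hzQ.1.2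
          have hb3 := hzQ.2.1
          have hb4 := hzQ.2.2
          refine ⟨(1 - z.2, 1 - z.1), ⟨⟨⟨by show (-1:ℝ) ≤ 1 - z.2; linarith,
            by show (1:ℝ) - z.2 ≤ 2; linarith⟩,
            by show (-1:ℝ) ≤ 1 - z.1; linarith, by show (1:ℝ) - z.1 ≤ 2; linarith⟩, ?_⟩, ?_⟩
          · show H (1 - (1 - z.1), 1 - (1 - z.2)) < c
            have : ((1:ℝ) - (1 - z.1), (1:ℝ) - (1 - z.2)) = z := Prod.ext_iff.mpr ⟨by ring, by ring⟩
            rwa [this]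
          · rw [heapp]
            exact Prod.ext_iff.mpr ⟨by ring, by ring⟩
      have hep : e (1 - p.2, (-1:ℝ)) = p := by
        rw [heapp]
        exact Prod.ext_iff.mpr ⟨by rw [h]; ring, by ring⟩
      rw [himg, hep] at hST
      exact hST
    · -- bottom edge : y = -1
      have hxne1 : p.1 ≠ -1 := fun h1 => hnotA ⟨h1, h⟩
      have hxne2 : p.1 ≠ 2 := fun h1 => hnotP1 ⟨h1, h⟩
      have hx₀ : p.1 ∈ Ioo (-1:ℝ) 2 :=
        ⟨lt_of_le_of_ne hp11 (Ne.symm hxne1), lt_of_le_of_ne hp12 hxne2⟩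
      have hmono : ∀ y a b : ℝ, -1 ≤ y → y ≤ -(1:ℝ)/2 → a < b → H (a, y) < H (b, y) :=
        fun y a b _ hy hab => aux_mono1 hF hf hH hy hab
      have hcJ : H (p.1, -1) = c := by
        have : (p.1, (-1:ℝ)) = p := Prod.ext_iff.mpr ⟨rfl, h.symm⟩
        rw [this]
        exact hpc
      obtain ⟨a₀, ha₀, hclp, ρ, hρ, hmain⟩ := aux_edge H Hcont c hmono hx₀ hcJ
      rw [hlowset] at ha₀ hclp hmain
      have hpp : (p.1, (-1:ℝ)) = p := Prod.ext_iff.mpr ⟨rfl, h.symm⟩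
      rw [hpp] at hclp hmain
      exact ⟨a₀, ha₀, hclp, ρ, hρ, hmain⟩
    · -- top edge : y = 2
      have hxne1 : p.1 ≠ -1 := fun h1 => hnotP2 ⟨h1, h⟩
      have hxne2 : p.1 ≠ 2 := fun h1 => hnotB ⟨h1, h⟩
      have hx₀ : 1 - p.1 ∈ Ioo (-1:ℝ) 2 := by
        constructor
        · have := lt_of_le_of_ne hp12 hxne2; linarith
        · have := lt_of_le_of_ne hp11 (Ne.symm hxne1); linarith
      set J : ℝ × ℝ → ℝ := fun q => H (1 - q.1, 1 - q.2) with hJdef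
      have hJc : Continuous J := Hcont.comp (by fun_prop)
      have hmono : ∀ y a b : ℝ, -1 ≤ y → y ≤ -(1:ℝ)/2 → a < b → J (a, y) < J (b, y) := by
        intro y a b _ hy hab
        show H (1 - a, 1 - y) < H (1 - b, 1 - y)
        exact aux_mono2 hF hf hH (by linarith) (by linarith)
      have hcJ : J (1 - p.1, -1) = c := by
        show H (1 - (1 - p.1), 1 - (-1)) = c
        have : ((1:ℝ) - (1 - p.1), (1:ℝ) - (-1)) = p := Prod.ext_iff.mpr ⟨by ring, by rw [h]; ring⟩
        rw [this]
        exact hpc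
      have hST := aux_ST_transport auxRefl auxRefl_isometry _ _
        (aux_edge J hJc c hmono hx₀ hcJ)
      have heapp : ∀ x : ℝ × ℝ, auxRefl x = (1 - x.1, 1 - x.2) := fun x => rfl
      have himg : auxRefl '' {q : ℝ × ℝ | q ∈ Icc (-1:ℝ) 2 ×ˢ Icc (-1:ℝ) 2 ∧ J q < c} = low := by
        ext z
        constructor
        · rintro ⟨x, ⟨hxQ, hxJ⟩, rfl⟩
          have hb1 := hxQ.1.1
          have hb2 := hxQ.1.2
          have hb3 := hxQ.2.1
          have hb4 := hxQ.2.2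
          rw [heapp x]
          refine ⟨?_, hxJ⟩
          rw [hQ]
          refine ⟨⟨?_, ?_⟩, ?_, ?_⟩
          · show (-1:ℝ) ≤ 1 - x.1
            linarith
          · show (1:ℝ) - x.1 ≤ 2
            linarith
          · show (-1:ℝ) ≤ 1 - x.2
            linarith
          · show (1:ℝ) - x.2 ≤ 2
            linarith
        · rintro ⟨hzQ, hzH⟩
          rw [hQ] at hzQ
          have hb1 := hzQ.1.1
          have hb2 := hzQ.1.2
          have hb3 := hzQ.2.1
          have hb4 := hzQ.2.2
          refine ⟨(1 - z.1, 1 - z.2), ⟨⟨⟨by show (-1:ℝ) ≤ 1 - z.1; linarith,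
            by show (1:ℝ) - z.1 ≤ 2; linarith⟩,
            by show (-1:ℝ) ≤ 1 - z.2; linarith, by show (1:ℝ) - z.2 ≤ 2; linarith⟩, ?_⟩, ?_⟩
          · show H (1 - (1 - z.1), 1 - (1 - z.2)) < c
            have : ((1:ℝ) - (1 - z.1), (1:ℝ) - (1 - z.2)) = z := Prod.ext_iff.mpr ⟨by ring, by ring⟩
            rwa [this]
          · rw [heapp]
            exact Prod.ext_iff.mpr ⟨by ring, by ring⟩
      have hep : auxRefl (1 - p.1, (-1:ℝ)) = p := by
        rw [heapp]
        exact Prod.ext_iff.mpr ⟨by ring, by rw [h]; ring⟩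
      rw [himg, hep] at hST
      exact hST
  -- countability : every component of `low` contains a rational point
  have hrat : ∀ q ∈ low, ∃ r : ℚ × ℚ,
      (((r.1:ℝ), (r.2:ℝ)) : ℝ × ℝ) ∈ connectedComponentIn low q := by
    intro q hq
    obtain ⟨ε, hε, hsubQ⟩ := hlowopen q hq
    have hqQ' : q ∈ Icc (-1:ℝ) 2 ×ˢ Icc (-1:ℝ) 2 := by rw [← hQ]; exact hq.1
    obtain ⟨⟨hq11, hq12⟩, hq21, hq22⟩ := hqQ'
    set t := min 1 (ε/3) with htdef
    have htpos : 0 < t := lt_min one_pos (by linarith)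
    have ht1 : t ≤ 1 := min_le_left _ _
    have ht3 : t ≤ ε/3 := min_le_right _ _
    set z1 := (1 - t) * q.1 + t * (1/2) with hz1def
    set z2 := (1 - t) * q.2 + t * (1/2) with hz2def
    have hz1lb : -1 + (3/2)*t ≤ z1 := by
      nlinarith [mul_nonneg (by linarith : (0:ℝ) ≤ 1 - t) (by linarith : (0:ℝ) ≤ q.1 + 1)]
    have hz1ub : z1 ≤ 2 - (3/2)*t := by
      nlinarith [mul_nonneg (by linarith : (0:ℝ) ≤ 1 - t) (by linarith : (0:ℝ) ≤ 2 - q.1)]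
    have hz2lb : -1 + (3/2)*t ≤ z2 := by
      nlinarith [mul_nonneg (by linarith : (0:ℝ) ≤ 1 - t) (by linarith : (0:ℝ) ≤ q.2 + 1)]
    have hz2ub : z2 ≤ 2 - (3/2)*t := by
      nlinarith [mul_nonneg (by linarith : (0:ℝ) ≤ 1 - t) (by linarith : (0:ℝ) ≤ 2 - q.2)]
    have hz1q : |z1 - q.1| ≤ (3/2)*t := by
      have he : z1 - q.1 = t * (1/2 - q.1) := by rw [hz1def]; ring
      rw [he, abs_mul, abs_of_pos htpos]
      have hh : |1/2 - q.1| ≤ 3/2 := abs_le.mpr ⟨by linarith, by linarith⟩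
      nlinarith [mul_le_mul_of_nonneg_left hh (le_of_lt htpos)]
    have hz2q : |z2 - q.2| ≤ (3/2)*t := by
      have he : z2 - q.2 = t * (1/2 - q.2) := by rw [hz2def]; ring
      rw [he, abs_mul, abs_of_pos htpos]
      have hh : |1/2 - q.2| ≤ 3/2 := abs_le.mpr ⟨by linarith, by linarith⟩
      nlinarith [mul_le_mul_of_nonneg_left hh (le_of_lt htpos)]
    set sε := min (t/2) (ε/3) with hsdef
    have hspos : 0 < sε := lt_min (by linarith) (by linarith)
    obtain ⟨r1, hr1a, hr1b⟩ := exists_rat_btwn (show z1 - sε < z1 by linarith)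
    obtain ⟨r2, hr2a, hr2b⟩ := exists_rat_btwn (show z2 - sε < z2 by linarith)
    have hs1 : sε ≤ t/2 := min_le_left _ _
    have hs2 : sε ≤ ε/3 := min_le_right _ _
    clear_value t z1 z2 sε
    have hr1Q : (r1:ℝ) ∈ Icc (-1:ℝ) 2 := by
      constructor
      · have : -1 + (3/2)*t - t/2 ≤ z1 - sε := by linarith
        linarith
      · linarith
    have hr2Q : (r2:ℝ) ∈ Icc (-1:ℝ) 2 := by
      constructor
      · have : -1 + (3/2)*t - t/2 ≤ z2 - sε := by linarith
        linarith
      · linarith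
    have hrdist : dist (((r1:ℝ), (r2:ℝ)) : ℝ × ℝ) q ≤ ε := by
      rw [Prod.dist_eq]
      have hd1 : dist (r1:ℝ) q.1 ≤ ε := by
        rw [Real.dist_eq]
        have := abs_sub_le (r1:ℝ) z1 q.1
        have h1 : |(r1:ℝ) - z1| ≤ sε := abs_le.mpr ⟨by linarith, by linarith⟩
        linarith
      have hd2 : dist (r2:ℝ) q.2 ≤ ε := by
        rw [Real.dist_eq]
        have := abs_sub_le (r2:ℝ) z2 q.2
        have h1 : |(r2:ℝ) - z2| ≤ sε := abs_le.mpr ⟨by linarith, by linarith⟩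
        linarith
      exact max_le hd1 hd2
    have hrmem : (((r1:ℝ), (r2:ℝ)) : ℝ × ℝ) ∈ Metric.closedBall q ε ∩ Q := by
      refine ⟨Metric.mem_closedBall.mpr hrdist, ?_⟩
      rw [hQ]
      exact ⟨hr1Q, hr2Q⟩
    have hpiece_conn : IsPreconnected (Metric.closedBall q ε ∩ Q) :=
      ((convex_closedBall q ε).inter hQconv).isPreconnected
    have hqmem : q ∈ Metric.closedBall q ε ∩ Q :=
      ⟨Metric.mem_closedBall_self (le_of_lt hε), hq.1⟩
    exact ⟨(r1, r2), hpiece_conn.subset_connectedComponentIn hqmem hsubQ hrmem⟩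
  set COMPS : Set (Set (ℝ × ℝ)) := {C | ∃ q ∈ low, C = connectedComponentIn low q} with hCOMPS
  have hCOMPS_count : COMPS.Countable := by
    have hex : ∀ C ∈ COMPS, ∃ r : ℚ × ℚ, (((r.1:ℝ), (r.2:ℝ)) : ℝ × ℝ) ∈ C := by
      rintro C ⟨q, hq, rfl⟩
      exact hrat q hq
    choose! pick hpick using hex
    have hinj : Function.Injective (fun C : COMPS => pick C.1) := by
      rintro ⟨C, hC⟩ ⟨C', hC'⟩ heq
      simp only at heq
      apply Subtype.ext
      show C = C'
      obtain ⟨pt, h1, h2⟩ : ∃ pt : ℝ × ℝ, pt ∈ C ∧ pt ∈ C' :=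
        ⟨_, by rw [← heq]; exact hpick C hC, hpick C' hC'⟩
      obtain ⟨q, hq, hCeq⟩ := hC
      obtain ⟨q', hq', hC'eq⟩ := hC'
      rw [hCeq] at h1 ⊢
      rw [hC'eq] at h2 ⊢
      rw [connectedComponentIn_eq h1, connectedComponentIn_eq h2]
    exact Set.countable_coe_iff.mp hinj.countable
  -- enumerate the closed classes K ∩ closure C
  set CL : Set (Set (ℝ × ℝ)) := (fun C => K ∩ closure C) '' COMPS with hCLdef
  have hUcomp : connectedComponentIn low A ∈ COMPS := ⟨A, hAlow, rfl⟩
  have hVcomp : connectedComponentIn low B ∈ COMPS := ⟨B, hBlow, rfl⟩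
  have hCLne : CL.Nonempty := ⟨_, mem_image_of_mem _ hUcomp⟩
  have hCLcount : CL.Countable := hCOMPS_count.image _
  obtain ⟨Efun, hEfun⟩ := hCLcount.exists_eq_range hCLne
  have hEmem : ∀ n, ∃ C ∈ COMPS, Efun n = K ∩ closure C := by
    intro n
    have : Efun n ∈ CL := by rw [hEfun]; exact mem_range_self n
    obtain ⟨C, hC, hCe⟩ := this
    exact ⟨C, hC, hCe.symm⟩
  -- uniqueness of the adjacent component at points of K
  have huniq : ∀ p ∈ K, ∀ C ∈ COMPS, ∀ C' ∈ COMPS,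
      p ∈ closure C → p ∈ closure C' → C = C' := by
    rintro p hpK C ⟨qc, hqc, rfl⟩ C' ⟨qc', hqc', rfl⟩ hpC hpC'
    have hpQ : p ∈ Q := hKQ hpK
    have hple : H p ≤ c := hKlev p hpK
    rcases hple.lt_or_eq with hplt | hpeq
    · have hplow : p ∈ low := ⟨hpQ, hplt⟩
      obtain ⟨ε, hε, hsub⟩ := hlowopen p hplow
      have hpiece_conn : IsPreconnected (Metric.closedBall p ε ∩ Q) :=
        ((convex_closedBall p ε).inter hQconv).isPreconnected
      have hkey : ∀ qd, qd ∈ low → p ∈ closure (connectedComponentIn low qd) →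
          connectedComponentIn low qd = connectedComponentIn low p := by
        intro qd hqd hpcl
        rw [Metric.mem_closure_iff] at hpcl
        obtain ⟨z, hz, hdz⟩ := hpcl ε hε
        have hzlow : z ∈ low := connectedComponentIn_subset _ _ hz
        have hzpiece : z ∈ Metric.closedBall p ε ∩ Q :=
          ⟨Metric.mem_closedBall.mpr (by rw [dist_comm]; exact le_of_lt hdz), hzlow.1⟩
        have hzp : z ∈ connectedComponentIn low p :=
          hpiece_conn.subset_connectedComponentIn
            ⟨Metric.mem_closedBall_self (le_of_lt hε), hpQ⟩ hsub hzpiece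
        calc connectedComponentIn low qd = connectedComponentIn low z :=
              connectedComponentIn_eq hz
        _ = connectedComponentIn low p := (connectedComponentIn_eq hzp).symm
      rw [hkey qc hqc hpC, hkey qc' hqc' hpC']
    · by_cases hpint : p ∈ interior Q
      · exact keyint p hpint hpeq _ _ ⟨qc, hqc, rfl⟩ ⟨qc', hqc', rfl⟩ hpC hpC'
      · obtain ⟨a₀, ha₀, hcl, ρ, hρ, hmain⟩ := bdry p hpQ hpeq hpint
        have hkey : ∀ qd, qd ∈ low → p ∈ closure (connectedComponentIn low qd) →
            connectedComponentIn low qd = connectedComponentIn low a₀ := by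
          intro qd hqd hpcl
          rw [Metric.mem_closure_iff] at hpcl
          obtain ⟨z, hz, hdz⟩ := hpcl ρ hρ
          have hzlow : z ∈ low := connectedComponentIn_subset _ _ hz
          have hza : z ∈ connectedComponentIn low a₀ :=
            hmain z hzlow (by rwa [dist_comm])
          calc connectedComponentIn low qd = connectedComponentIn low z :=
                connectedComponentIn_eq hz
          _ = connectedComponentIn low a₀ := (connectedComponentIn_eq hza).symm
        rw [hkey qc hqc hpC, hkey qc' hqc' hpC']
  -- the classes cover K
  have hcover : K ⊆ ⋃ n, Efun n := by
    intro p hpK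
    have hpQ : p ∈ Q := hKQ hpK
    have hple := hKlev p hpK
    have hclex : ∃ C ∈ COMPS, p ∈ closure C := by
      rcases hple.lt_or_eq with hplt | hpeq
      · exact ⟨connectedComponentIn low p, ⟨p, ⟨hpQ, hplt⟩, rfl⟩,
          subset_closure (mem_connectedComponentIn ⟨hpQ, hplt⟩)⟩
      · by_cases hpint : p ∈ interior Q
        · obtain ⟨qd, hqd, hclp⟩ := hlowseg p hpint hpeq
          exact ⟨connectedComponentIn low qd, ⟨qd, hqd, rfl⟩, hclp⟩
        · obtain ⟨a₀, ha₀, hclp, _⟩ := bdry p hpQ hpeq hpint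
          exact ⟨connectedComponentIn low a₀, ⟨a₀, ha₀, rfl⟩, hclp⟩
    obtain ⟨C, hC, hpc⟩ := hclex
    have hmemCL : K ∩ closure C ∈ CL := mem_image_of_mem _ hC
    rw [hEfun] at hmemCL
    obtain ⟨n, hn⟩ := hmemCL
    exact mem_iUnion.mpr ⟨n, by rw [hn]; exact ⟨hpK, hpc⟩⟩
  have hdisjE : ∀ m n, Efun m = Efun n ∨ Disjoint (Efun m) (Efun n) := by
    intro m n
    obtain ⟨C, hC, hCe⟩ := hEmem m
    obtain ⟨C', hC', hC'e⟩ := hEmem n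
    by_cases hCC : C = C'
    · left; rw [hCe, hC'e, hCC]
    · right
      rw [hCe, hC'e, Set.disjoint_left]
      rintro p ⟨hpK, hpC⟩ ⟨_, hpC'⟩
      exact hCC (huniq p hpK C hC C' hC' hpC hpC')
  have hEclosed : ∀ n, IsClosed (Efun n) := by
    intro n
    obtain ⟨C, _, hCe⟩ := hEmem n
    rw [hCe]
    exact (hKcomp.isClosed).inter isClosed_closure
  have hKUmem : K ∩ closure (connectedComponentIn low A) ∈ CL := mem_image_of_mem _ hUcomp
  have hKVmem : K ∩ closure (connectedComponentIn low B) ∈ CL := mem_image_of_mem _ hVcomp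
  rw [hEfun] at hKUmem hKVmem
  obtain ⟨nU, hnU⟩ := hKUmem
  obtain ⟨nV, hnV⟩ := hKVmem
  have hne01 : Efun nU ≠ Efun nV := by
    intro heq
    have hA1 : A ∈ Efun nU := by
      rw [hnU]
      exact ⟨hAK, subset_closure (mem_connectedComponentIn hAlow)⟩
    rw [heq, hnV] at hA1
    exact hUVne (huniq A hAK _ hUcomp _ hVcomp
      (subset_closure (mem_connectedComponentIn hAlow)) hA1.2)
  have h0 : (K ∩ Efun nU).Nonempty :=
    ⟨A, hAK, by rw [hnU]; exact ⟨hAK, subset_closure (mem_connectedComponentIn hAlow)⟩⟩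
  have h1 : (K ∩ Efun nV).Nonempty :=
    ⟨B, hBK, by rw [hnV]; exact ⟨hBK, subset_closure (mem_connectedComponentIn hBlow)⟩⟩
  exact aux_sierpinski hKcomp hKconn Efun hEclosed hdisjE hcover nU nV hne01 h0 h1
end

section
/- If x ∈ [−1, 0), y ∈ [−1, 2] and H(x,y) < c, then (x,y) lies in the connected component of {(x,y) ∈ Q : H(x,y) ≠ c} containing (−1,−1). Consequently, the strip [−1,0) × [−1,2] is disjoint from the connected component of {(x,y) ∈ Q : H(x,y) ≠ c} containing (2,2). -/
open Set

/-- If `x ∈ [-1, 0)`, `y ∈ [-1, 2]` and `H (x,y) < c`, then `(x,y)` lies in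
the connected component of `{p ∈ Q : H p ≠ c}` containing `(-1,-1)`;
consequently the strip `[-1,0) × [-1,2]` is disjoint from the component
containing `(2,2)`. -/
theorem left_strip_in_component_of_bottom_left_corner
    (F G f g : ℝ → ℝ)
    (hF : ∀ x, HasDerivAt F (f x) x) (hG : ∀ y, HasDerivAt G (g y) y)
    (hf : ∀ x, f x ∈ Set.Icc (0:ℝ) 1) (hg : ∀ y, g y ∈ Set.Icc (0:ℝ) 1)
    (H : ℝ × ℝ → ℝ) (hH : ∀ x y : ℝ, H (x, y) = F x + G y - x * y)
    (Q : Set (ℝ × ℝ)) (hQ : Q = Set.Icc (-1:ℝ) 2 ×ˢ Set.Icc (-1:ℝ) 2)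
    (c : ℝ)
    (hc : c = sInf {d : ℝ | ((2:ℝ), (2:ℝ)) ∈
      connectedComponentIn {p : ℝ × ℝ | p ∈ Q ∧ H p ≤ d} (-1, -1)})
    (hmax : max (H (-1, -1)) (H (2, 2)) < c)
    (S : Set (ℝ × ℝ)) (hS : S = {p : ℝ × ℝ | p ∈ Q ∧ H p ≠ c}) :
    (∀ x y : ℝ, x ∈ Set.Ico (-1:ℝ) 0 → y ∈ Set.Icc (-1:ℝ) 2 → H (x, y) < c →
      (x, y) ∈ connectedComponentIn S (-1, -1)) ∧
    (Set.Ico (-1:ℝ) 0 ×ˢ Set.Icc (-1:ℝ) 2) ∩ connectedComponentIn S (2, 2) = ∅ := by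
  have hFd : Differentiable ℝ F := fun x => (hF x).differentiableAt
  have hGd : Differentiable ℝ G := fun x => (hG x).differentiableAt
  have hHeq : H = fun p : ℝ × ℝ => F p.1 + G p.2 - p.1 * p.2 := by
    funext p
    rw [← hH p.1 p.2]
  have hHcont : Continuous H := by
    rw [hHeq]
    exact ((hFd.continuous.comp continuous_fst).add (hGd.continuous.comp continuous_snd)).sub
      (continuous_fst.mul continuous_snd)
  have hQc1 : ((-1:ℝ), (-1:ℝ)) ∈ Q := by
    rw [hQ]; constructor <;> constructor <;> norm_num
  have hQc2 : ((2:ℝ), (2:ℝ)) ∈ Q := by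
    rw [hQ]; constructor <;> constructor <;> norm_num
  have hH11 : H (-1, -1) < c := lt_of_le_of_lt (le_max_left _ _) hmax
  have hH22 : H (2, 2) < c := lt_of_le_of_lt (le_max_right _ _) hmax
  -- monotonicity of H in the second variable, for fixed x ≤ 0
  have mono_y : ∀ x : ℝ, x ≤ 0 → Monotone (fun t => H (x, t)) := by
    intro x hx
    have hfun : (fun t => H (x, t)) = fun t => F x + G t - x * t := funext fun t => hH x t
    rw [hfun]
    apply monotone_of_hasDerivAt_nonneg (f' := fun t => g t - x)
    · intro t
      have h1 : HasDerivAt (fun t : ℝ => x * t) x t := by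
        simpa using (hasDerivAt_id t).const_mul x
      exact (((hasDerivAt_const t (F x)).add (hG t)).sub h1).congr_deriv (by ring)
    · intro t
      simp only [Pi.zero_apply]
      have := (hg t).1
      linarith
  -- monotonicity of H (·, -1)
  have mono_x : Monotone (fun s => H (s, -1)) := by
    have hfun : (fun s => H (s, -1)) = fun s => F s + G (-1) - s * (-1) := funext fun s => hH s _
    rw [hfun]
    apply monotone_of_hasDerivAt_nonneg (f' := fun s => f s + 1)
    · intro s
      have h1 : HasDerivAt (fun s : ℝ => s * (-1)) (-1) s := by
        simpa using (hasDerivAt_id s).mul_const (-1)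
      have := ((hF s).add (hasDerivAt_const s (G (-1)))).sub h1
      exact this.congr_deriv (by ring)
    · intro s
      simp only [Pi.zero_apply]
      have := (hf s).1
      linarith
  -- Part 1
  have part1 : ∀ x y : ℝ, x ∈ Set.Ico (-1:ℝ) 0 → y ∈ Set.Icc (-1:ℝ) 2 → H (x, y) < c →
      (x, y) ∈ connectedComponentIn S (-1, -1) := by
    intro x y hx hy hxy
    set L : Set (ℝ × ℝ) := ({x} ×ˢ Icc (-1:ℝ) y) ∪ (Icc (-1:ℝ) x ×ˢ {(-1:ℝ)}) with hL
    have hLpre : IsPreconnected L := by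
      apply IsPreconnected.union (x, -1)
      · exact ⟨rfl, le_refl _, hy.1⟩
      · exact ⟨⟨hx.1, le_refl x⟩, rfl⟩
      · exact ((convex_singleton x).prod (convex_Icc _ _)).isPreconnected
      · exact ((convex_Icc _ _).prod (convex_singleton _)).isPreconnected
    have hLS : L ⊆ S := by
      rintro ⟨a, b⟩ hp
      have hpb : H (a, b) < c := by
        rcases hp with ⟨ha, hb⟩ | ⟨ha, hb⟩
        · simp only [mem_singleton_iff] at ha
          subst ha
          exact lt_of_le_of_lt (mono_y a (le_of_lt hx.2) hb.2) hxy
        · simp only [mem_singleton_iff] at hb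
          subst hb
          calc H (a, -1) ≤ H (x, -1) := mono_x ha.2
            _ ≤ H (x, y) := mono_y x (le_of_lt hx.2) hy.1
            _ < c := hxy
      have hpQ : (a, b) ∈ Q := by
        rw [hQ]
        rcases hp with ⟨ha, hb⟩ | ⟨ha, hb⟩
        · simp only [mem_singleton_iff] at ha
          subst ha
          exact ⟨⟨hx.1, by linarith [hx.2]⟩, hb.1, le_trans hb.2 hy.2⟩
        · simp only [mem_singleton_iff] at hb
          subst hb
          exact ⟨⟨ha.1, by linarith [ha.2, hx.2]⟩, by norm_num⟩
      rw [hS]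
      exact ⟨hpQ, ne_of_lt hpb⟩
    have h1 : ((-1:ℝ), (-1:ℝ)) ∈ L := Or.inr ⟨⟨le_refl _, hx.1⟩, rfl⟩
    have h2 : (x, y) ∈ L := Or.inl ⟨rfl, hy.1, le_refl y⟩
    exact hLpre.subset_connectedComponentIn h1 hLS h2
  refine ⟨part1, ?_⟩
  -- key: H < c on any connected component of S based at a point with H < c
  have key : ∀ p₀ : ℝ × ℝ, H p₀ < c → ∀ p ∈ connectedComponentIn S p₀, H p < c := by
    intro p₀ hp₀ p hp
    by_contra hge
    push_neg at hge
    have hp₀S : p₀ ∈ S := connectedComponentIn_nonempty_iff.mp ⟨p, hp⟩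
    have hpre : IsPreconnected (connectedComponentIn S p₀) := isPreconnected_connectedComponentIn
    have himg : IsPreconnected (H '' connectedComponentIn S p₀) :=
      hpre.image H hHcont.continuousOn
    have hmemc : c ∈ H '' connectedComponentIn S p₀ := by
      apply himg.Icc_subset ⟨p₀, mem_connectedComponentIn hp₀S, rfl⟩ ⟨p, hp, rfl⟩
      exact ⟨le_of_lt hp₀, hge⟩
    obtain ⟨q, hq, hqc⟩ := hmemc
    have hqS : q ∈ S := connectedComponentIn_subset S p₀ hq
    rw [hS] at hqS
    exact hqS.2 hqc
  rw [eq_empty_iff_forall_notMem]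
  rintro ⟨x, y⟩ ⟨⟨hx, hy⟩, hmem⟩
  -- H (x,y) < c, so (x,y) is in the component of (-1,-1)
  have hxy : H (x, y) < c := key (2, 2) hH22 _ hmem
  have hmem1 : (x, y) ∈ connectedComponentIn S (-1, -1) := part1 x y hx hy hxy
  -- thus the components of (2,2) and (-1,-1) agree, so (2,2) ∈ C := comp of (-1,-1)
  have h22S : ((2:ℝ), (2:ℝ)) ∈ S := by rw [hS]; exact ⟨hQc2, ne_of_lt hH22⟩
  have h11S : ((-1:ℝ), (-1:ℝ)) ∈ S := by rw [hS]; exact ⟨hQc1, ne_of_lt hH11⟩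
  have hcomp_eq : connectedComponentIn S (2, 2) = connectedComponentIn S (-1, -1) := by
    rw [connectedComponentIn_eq hmem, connectedComponentIn_eq hmem1]
  have h22C : ((2:ℝ), (2:ℝ)) ∈ connectedComponentIn S (-1, -1) := by
    rw [← hcomp_eq]
    exact mem_connectedComponentIn h22S
  -- the clamping retraction onto Q
  set r : ℝ × ℝ → ℝ × ℝ := fun p => (max (-1) (min p.1 2), max (-1) (min p.2 2)) with hr
  have hrcont : Continuous r := by
    apply Continuous.prodMk
    · exact continuous_const.max (continuous_fst.min continuous_const)
    · exact continuous_const.max (continuous_snd.min continuous_const)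
  have hrQ : ∀ p, r p ∈ Q := by
    intro p
    rw [hQ]
    constructor <;>
      exact ⟨le_max_left _ _, max_le (by norm_num) (min_le_right _ _)⟩
  have hrid : ∀ p ∈ Q, r p = p := by
    rintro ⟨a, b⟩ hp
    rw [hQ] at hp
    obtain ⟨⟨ha1, ha2⟩, hb1, hb2⟩ := hp
    simp only [hr, Prod.mk.injEq]
    rw [min_eq_left ha2, max_eq_right ha1, min_eq_left hb2, max_eq_right hb1]
    exact ⟨rfl, rfl⟩
  -- the open set V
  set V : Set (ℝ × ℝ) := {p | H (r p) < c} with hV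
  have hVopen : IsOpen V := isOpen_lt (hHcont.comp hrcont) continuous_const
  have hCV : connectedComponentIn S (-1, -1) ⊆ V := by
    intro p hp
    have hpS : p ∈ S := connectedComponentIn_subset S _ hp
    have hpQ : p ∈ Q := by rw [hS] at hpS; exact hpS.1
    have : H p < c := key (-1, -1) hH11 p hp
    show H (r p) < c
    rw [hrid p hpQ]
    exact this
  have h11V : ((-1:ℝ), (-1:ℝ)) ∈ V := by
    show H (r (-1, -1)) < c
    rw [hrid _ hQc1]
    exact hH11
  -- the component C' of V containing (-1,-1)
  have hCsub : connectedComponentIn S (-1, -1) ⊆ connectedComponentIn V (-1, -1) :=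
    (isPreconnected_connectedComponentIn).subset_connectedComponentIn
      (mem_connectedComponentIn h11S) hCV
  have h22C' : ((2:ℝ), (2:ℝ)) ∈ connectedComponentIn V (-1, -1) := hCsub h22C
  have h11C' : ((-1:ℝ), (-1:ℝ)) ∈ connectedComponentIn V (-1, -1) :=
    mem_connectedComponentIn h11V
  have hC'open : IsOpen (connectedComponentIn V (-1, -1)) := hVopen.connectedComponentIn
  have hC'conn : IsConnected (connectedComponentIn V (-1, -1)) :=
    isConnected_connectedComponentIn_iff.mpr h11V
  have hC'path : IsPathConnected (connectedComponentIn V (-1, -1)) :=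
    (hC'open.isConnected_iff_isPathConnected.mp hC'conn)
  obtain ⟨γ, hγ⟩ := hC'path.joinedIn _ h11C' _ h22C'
  -- the compact connected set K = r '' range γ
  set K : Set (ℝ × ℝ) := r '' (Set.range γ) with hK
  have hKcomp : IsCompact K := (isCompact_range γ.continuous).image hrcont
  have hKconn : IsConnected K :=
    (isConnected_range γ.continuous).image r hrcont.continuousOn
  have hKlt : ∀ p ∈ K, H p < c := by
    rintro p ⟨q, ⟨t, rfl⟩, rfl⟩
    exact connectedComponentIn_subset V _ (hγ t)
  have hKQ : ∀ p ∈ K, p ∈ Q := by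
    rintro p ⟨q, _, rfl⟩
    exact hrQ q
  have h11K : ((-1:ℝ), (-1:ℝ)) ∈ K := by
    refine ⟨γ 0, ⟨0, rfl⟩, ?_⟩
    rw [γ.source]
    exact hrid _ hQc1
  have h22K : ((2:ℝ), (2:ℝ)) ∈ K := by
    refine ⟨γ 1, ⟨1, rfl⟩, ?_⟩
    rw [γ.target]
    exact hrid _ hQc2
  -- max of H over K
  obtain ⟨z, hzK, hz⟩ := hKcomp.exists_isMaxOn ⟨_, h11K⟩ hHcont.continuousOn
  have hdlt : H z < c := hKlt z hzK
  have hKsub : K ⊆ {p : ℝ × ℝ | p ∈ Q ∧ H p ≤ H z} := fun p hp => ⟨hKQ p hp, hz hp⟩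
  have hmemD : ((2:ℝ), (2:ℝ)) ∈
      connectedComponentIn {p : ℝ × ℝ | p ∈ Q ∧ H p ≤ H z} (-1, -1) :=
    hKconn.isPreconnected.subset_connectedComponentIn h11K hKsub h22K
  have hbdd : BddBelow {d : ℝ | ((2:ℝ), (2:ℝ)) ∈
      connectedComponentIn {p : ℝ × ℝ | p ∈ Q ∧ H p ≤ d} (-1, -1)} := by
    refine ⟨H (-1, -1), fun d hd => ?_⟩
    have : ((-1:ℝ), (-1:ℝ)) ∈ {p : ℝ × ℝ | p ∈ Q ∧ H p ≤ d} :=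
      connectedComponentIn_nonempty_iff.mp ⟨_, hd⟩
    exact this.2
  have : c ≤ H z := by
    rw [hc]
    exact csInf_le hbdd hmemD
  linarith
end

section
/- Let (x₀, y₀) ∈ ℝ² be such that H(x₀, y₀) = 0 and ∂₂H(x₀, y₀) = g(y₀) − x₀ ≠ 0. Then there exists ε > 0 such that whenever x₁ ∈ [x₀ − ε, x₀ + ε] and y₁, y₂ ∈ [y₀ − ε, y₀ + ε] satisfy H(x₁, y₁) = H(x₁, y₂) = 0, one of the following holds: (i) y₁ = y₂ = y₀; (ii) y₁ < y₀ and y₂ < y₀; (iii) y₁ > y₀ and y₂ > y₀. -/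
open Set

private lemma core_pos (G g : ℝ → ℝ) (x₀ y₀ : ℝ)
    (hG : HasDerivAt G (g y₀) y₀) (hd : 0 < g y₀ - x₀) :
    ∃ ε > (0:ℝ), ∀ x₁, |x₁ - x₀| ≤ ε → ∀ y₁, |y₁ - y₀| ≤ ε → ∀ y₂, |y₂ - y₀| ≤ ε →
      G y₁ - x₁ * y₁ = G y₂ - x₁ * y₂ →
      (y₁ = y₀ ∧ y₂ = y₀) ∨ (y₁ < y₀ ∧ y₂ < y₀) ∨ (y₀ < y₁ ∧ y₀ < y₂) := by
  set d := g y₀ - x₀ with hdd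
  have hslope := hasDerivAt_iff_tendsto_slope.mp hG
  rw [Metric.tendsto_nhdsWithin_nhds] at hslope
  obtain ⟨δ, hδ, hδ'⟩ := hslope (d/4) (by linarith)
  refine ⟨min (δ/2) (d/4), lt_min (by linarith) (by linarith), ?_⟩
  intro x₁ hx y₁ hy1 y₂ hy2 heq
  have hxd : |x₁ - x₀| ≤ d/4 := hx.trans (min_le_right _ _)
  -- key monotonicity fact
  have key : ∀ y : ℝ, |y - y₀| ≤ min (δ/2) (d/4) → y ≠ y₀ →
      (G y - x₁ * y) - (G y₀ - x₁ * y₀) = (slope G y₀ y - x₁) * (y - y₀) ∧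
      d/2 < slope G y₀ y - x₁ := by
    intro y hy hne
    have hyδ : dist y y₀ < δ := by
      rw [Real.dist_eq]
      have := hy.trans (min_le_left _ _)
      linarith
    have hs := hδ' (by simpa using hne) hyδ
    rw [Real.dist_eq] at hs
    constructor
    · have h1 : slope G y₀ y * (y - y₀) = G y - G y₀ := by
        rw [slope_def_field, div_mul_cancel₀ _ (sub_ne_zero.mpr hne)]
      nlinarith [h1]
    · have h1 : slope G y₀ y - g y₀ > -(d/4) := by
        cases abs_lt.mp hs; linarith
      have h2 : x₁ - x₀ ≤ d/4 := by cases abs_le.mp hxd; linarith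
      linarith [hdd]
  have mono : ∀ y : ℝ, |y - y₀| ≤ min (δ/2) (d/4) →
      (y₀ < y → (G y₀ - x₁ * y₀) < (G y - x₁ * y)) ∧
      (y < y₀ → (G y - x₁ * y) < (G y₀ - x₁ * y₀)) := by
    intro y hy
    constructor
    · intro hlt
      obtain ⟨he, hsl⟩ := key y hy (ne_of_gt hlt)
      nlinarith
    · intro hlt
      obtain ⟨he, hsl⟩ := key y hy (ne_of_lt hlt)
      nlinarith
  obtain ⟨m1u, m1d⟩ := mono y₁ hy1
  obtain ⟨m2u, m2d⟩ := mono y₂ hy2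
  rcases lt_trichotomy y₁ y₀ with h1 | h1 | h1 <;>
    rcases lt_trichotomy y₂ y₀ with h2 | h2 | h2
  · exact Or.inr (Or.inl ⟨h1, h2⟩)
  · exact absurd heq (by have := m1d h1; subst h2; linarith)
  · exact absurd heq (by have := m1d h1; have := m2u h2; linarith)
  · exact absurd heq (by have := m2d h2; subst h1; linarith)
  · exact Or.inl ⟨h1, h2⟩
  · exact absurd heq (by have := m2u h2; subst h1; linarith)
  · exact absurd heq (by have := m1u h1; have := m2d h2; linarith)
  · exact absurd heq (by have := m1u h1; subst h2; linarith)
  · exact Or.inr (Or.inr ⟨h1, h2⟩)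

private lemma core (G g : ℝ → ℝ) (x₀ y₀ : ℝ)
    (hG : HasDerivAt G (g y₀) y₀) (hd : g y₀ - x₀ ≠ 0) :
    ∃ ε > (0:ℝ), ∀ x₁, |x₁ - x₀| ≤ ε → ∀ y₁, |y₁ - y₀| ≤ ε → ∀ y₂, |y₂ - y₀| ≤ ε →
      G y₁ - x₁ * y₁ = G y₂ - x₁ * y₂ →
      (y₁ = y₀ ∧ y₂ = y₀) ∨ (y₁ < y₀ ∧ y₂ < y₀) ∨ (y₀ < y₁ ∧ y₀ < y₂) := by
  rcases hd.lt_or_gt with h | h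
  · -- g y₀ - x₀ < 0 : apply core_pos to -G, -g, -x₀
    have h' : 0 < (fun y => -g y) y₀ - (-x₀) := by simp; linarith
    obtain ⟨ε, hε, hmain⟩ := core_pos (fun y => -G y) (fun y => -g y) (-x₀) y₀
      (by exact hG.neg) h'
    refine ⟨ε, hε, ?_⟩
    intro x₁ hx y₁ hy1 y₂ hy2 heq
    have hx' : |(-x₁) - (-x₀)| ≤ ε := by
      rwa [show (-x₁) - (-x₀) = -(x₁ - x₀) by ring, abs_neg]
    exact hmain (-x₁) hx' y₁ hy1 y₂ hy2 (by simp; linarith)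
  · exact core_pos G g x₀ y₀ hG h

/-- If `H (x₀, y₀) = 0` and `∂₂H (x₀, y₀) = g y₀ - x₀ ≠ 0`, then there is
`ε > 0` such that for all `x₁ ∈ [x₀-ε, x₀+ε]` and `y₁, y₂ ∈ [y₀-ε, y₀+ε]`
with `H (x₁, y₁) = H (x₁, y₂) = 0`, either `y₁ = y₂ = y₀`, or both `y₁, y₂`
are below `y₀`, or both are above `y₀`. -/
theorem local_zero_set_dichotomy
    (F G f g : ℝ → ℝ)
    (hF : ∀ x, HasDerivAt F (f x) x) (hG : ∀ y, HasDerivAt G (g y) y)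
    (hf : ∀ x, f x ∈ Set.Icc (0:ℝ) 1) (hg : ∀ y, g y ∈ Set.Icc (0:ℝ) 1)
    (H : ℝ × ℝ → ℝ) (hH : ∀ x y : ℝ, H (x, y) = F x + G y - x * y)
    (x₀ y₀ : ℝ) (h0 : H (x₀, y₀) = 0) (hd : g y₀ - x₀ ≠ 0) :
    ∃ ε > (0:ℝ), ∀ x₁ ∈ Set.Icc (x₀ - ε) (x₀ + ε),
      ∀ y₁ ∈ Set.Icc (y₀ - ε) (y₀ + ε), ∀ y₂ ∈ Set.Icc (y₀ - ε) (y₀ + ε),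
        H (x₁, y₁) = 0 → H (x₁, y₂) = 0 →
          (y₁ = y₀ ∧ y₂ = y₀) ∨ (y₁ < y₀ ∧ y₂ < y₀) ∨ (y₀ < y₁ ∧ y₀ < y₂) := by
  obtain ⟨ε, hε, hmain⟩ := core G g x₀ y₀ (hG y₀) hd
  refine ⟨ε, hε, ?_⟩
  intro x₁ hx y₁ hy1 y₂ hy2 hz1 hz2
  rw [hH] at hz1 hz2
  have habs : ∀ a b : ℝ, a ∈ Set.Icc (b - ε) (b + ε) → |a - b| ≤ ε := by
    intro a b ⟨h1, h2⟩
    rw [abs_le]; constructor <;> linarith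
  exact hmain x₁ (habs _ _ hx) y₁ (habs _ _ hy1) y₂ (habs _ _ hy2) (by linarith)
end
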